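/- arXiv:1403.1737 — 5 statements merged into one kernel-verified Lean document; each statement's English description precedes it below -/
import Mathlib

section
/- Fix t > 0 and suppose μ ↦ s(t,μ) is a C^∞ function on [0,∞) with (−1)^j ∂_μ^j s(t,μ) ≥ 0 for all j ∈ ℕ₀ and μ ≥ 0 (complete monotonicity in μ). Then for every j ∈ ℕ₀ and μ ≥ 0 one has μ^j |∂_μ^j s(t,μ)| ≤ 2^j · j! · s(t, μ/2). -/
open scoped Nat


theorem completely_monotone_taylor_bound
    (s : ℝ → ℝ)
    (hs : ContDiffOn ℝ (⊤ : ℕ∞) s (Set.Ici 0))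
    (hcm : ∀ (j : ℕ) (μ : ℝ), 0 ≤ μ →
      0 ≤ (-1 : ℝ) ^ j * iteratedDerivWithin j s (Set.Ici 0) μ) :
    ∀ (j : ℕ) (μ : ℝ), 0 ≤ μ →
      μ ^ j * |iteratedDerivWithin j s (Set.Ici 0) μ| ≤
        2 ^ j * (Nat.factorial j) * s (μ / 2) := by
  intro j μ hμ
  set c : ℝ := μ / 2 with hc
  have hc0 : 0 ≤ c := by positivity
  have hcμ : c ≤ μ := by simp [hc]; linarith
  have hc2 : 2 * c = μ := by rw [hc]; ring
  clear_value c
  have hjs : ContDiffOn ℝ (j : ℕ∞) s (Set.Ici 0) := hs.of_le (by exact_mod_cast le_top)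
  -- the Taylor polynomial of order j based at y, evaluated at c
  set g : ℝ → ℝ := fun y => taylorWithinEval s j (Set.Ici 0) y c with hg
  -- g is antitone on [c, μ]
  have hanti : AntitoneOn g (Set.Icc c μ) := by
    apply antitoneOn_of_deriv_nonpos (convex_Icc c μ)
    · exact (continuousOn_taylorWithinEval (uniqueDiffOn_Ici 0) hjs).mono
        (Set.Icc_subset_Ici_iff hcμ |>.mpr hc0)
    · intro t ht
      rw [interior_Icc] at ht
      have hda := hasDerivWithinAt_taylorWithinEval (f := s) (x := c) (n := j)
        (s := Set.Ici 0) (s' := Set.Ioo c μ)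
        (uniqueDiffOn_Ici 0)
        (nhdsWithin_le_nhds (isOpen_Ioo.mem_nhds ht)) ht
        ((Set.Ioo_subset_Icc_self).trans (Set.Icc_subset_Ici_iff hcμ |>.mpr hc0))
        hjs
        ((hs.differentiableOn_iteratedDerivWithin (by exact_mod_cast ENat.coe_lt_top j) (uniqueDiffOn_Ici 0)) t (le_trans hc0 ht.1.le))
      exact ((hda.hasDerivAt (isOpen_Ioo.mem_nhds ht)).differentiableAt).differentiableWithinAt
    · intro t ht
      rw [interior_Icc] at ht
      have ht0 : (0 : ℝ) ≤ t := le_trans hc0 ht.1.le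
      have hda := hasDerivWithinAt_taylorWithinEval (f := s) (x := c) (n := j)
        (s := Set.Ici 0) (s' := Set.Ioo c μ)
        (uniqueDiffOn_Ici 0)
        (nhdsWithin_le_nhds (isOpen_Ioo.mem_nhds ht)) ht
        ((Set.Ioo_subset_Icc_self).trans (Set.Icc_subset_Ici_iff hcμ |>.mpr hc0))
        hjs
        ((hs.differentiableOn_iteratedDerivWithin (by exact_mod_cast ENat.coe_lt_top j) (uniqueDiffOn_Ici 0)) t ht0)
      have hda' := hda.hasDerivAt (isOpen_Ioo.mem_nhds ht)
      rw [hda'.deriv]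
      -- sign analysis
      have hsign := hcm (j + 1) t ht0
      set D := iteratedDerivWithin (j + 1) s (Set.Ici 0) t with hD
      have hfac : (0 : ℝ) ≤ ((j ! : ℝ))⁻¹ := by positivity
      have hpow : (0 : ℝ) ≤ (t - c) ^ j := pow_nonneg (by linarith [ht.1]) j
      have hkey : (((j ! : ℝ))⁻¹ * (c - t) ^ j) • D =
          -(((j ! : ℝ))⁻¹ * (t - c) ^ j * ((-1 : ℝ) ^ (j + 1) * D)) := by
        rw [smul_eq_mul, show c - t = -(t - c) by ring, neg_pow, pow_succ]
        ring
      rw [hkey]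
      have : 0 ≤ ((j ! : ℝ))⁻¹ * (t - c) ^ j * ((-1 : ℝ) ^ (j + 1) * D) := by positivity
      linarith
  have h1 : g μ ≤ g c := hanti (Set.left_mem_Icc.mpr hcμ) (Set.right_mem_Icc.mpr hcμ) hcμ
  have h2 : g c = s c := taylorWithinEval_self s j (Set.Ici 0) c
  -- lower bound g μ by the j-th term of the sum
  have h3 : ((j ! : ℝ))⁻¹ * c ^ j * ((-1 : ℝ) ^ j * iteratedDerivWithin j s (Set.Ici 0) μ)
      ≤ g μ := by
    show _ ≤ taylorWithinEval s j (Set.Ici 0) μ c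
    rw [taylor_within_apply]
    have hterm : ∀ k ∈ Finset.range (j + 1),
        (0 : ℝ) ≤ (((k ! : ℝ))⁻¹ * (c - μ) ^ k) • iteratedDerivWithin k s (Set.Ici 0) μ := by
      intro k _
      have hsign := hcm k μ hμ
      have : (((k ! : ℝ))⁻¹ * (c - μ) ^ k) • iteratedDerivWithin k s (Set.Ici 0) μ =
          ((k ! : ℝ))⁻¹ * c ^ k * ((-1 : ℝ) ^ k * iteratedDerivWithin k s (Set.Ici 0) μ) := by
        rw [smul_eq_mul, show c - μ = -c by linarith, neg_pow]
        ring
      rw [this]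
      positivity
    have := Finset.single_le_sum hterm (Finset.self_mem_range_succ j)
    calc ((j ! : ℝ))⁻¹ * c ^ j * ((-1 : ℝ) ^ j * iteratedDerivWithin j s (Set.Ici 0) μ)
        = (((j ! : ℝ))⁻¹ * (c - μ) ^ j) • iteratedDerivWithin j s (Set.Ici 0) μ := by
          rw [smul_eq_mul, show c - μ = -c by linarith, neg_pow]; ring
      _ ≤ _ := this
  -- rewrite the absolute value
  have habs : |iteratedDerivWithin j s (Set.Ici 0) μ| =
      (-1 : ℝ) ^ j * iteratedDerivWithin j s (Set.Ici 0) μ := by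
    have hsign := hcm j μ hμ
    have : |(-1 : ℝ) ^ j * iteratedDerivWithin j s (Set.Ici 0) μ| =
        (-1 : ℝ) ^ j * iteratedDerivWithin j s (Set.Ici 0) μ := abs_of_nonneg hsign
    rw [abs_mul, abs_pow, abs_neg, abs_one, one_pow, one_mul] at this
    exact this
  have hmain : ((j ! : ℝ))⁻¹ * c ^ j * |iteratedDerivWithin j s (Set.Ici 0) μ| ≤ s c := by
    rw [habs]; linarith
  have hfacpos : (0 : ℝ) < (j ! : ℝ) := by positivity
  have h2pos : (0 : ℝ) < (2 : ℝ) ^ j := by positivity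
  have := mul_le_mul_of_nonneg_left hmain (by positivity : (0 : ℝ) ≤ 2 ^ j * (j ! : ℝ))
  calc μ ^ j * |iteratedDerivWithin j s (Set.Ici 0) μ|
      = 2 ^ j * (j ! : ℝ) * (((j ! : ℝ))⁻¹ * c ^ j * |iteratedDerivWithin j s (Set.Ici 0) μ|) := by
        rw [show μ = 2 * c by linarith, mul_pow]
        field_simp
    _ ≤ 2 ^ j * (j ! : ℝ) * s c := this
end

section
/- Let ψ: [0,∞) → ℝ be C^∞, completely monotone (i.e. (−1)^j ψ^{(j)}(μ) ≥ 0 for all j), and satisfy ψ(μ) ≤ 1/(1 + μL) for all μ ≥ 0, where L > 0 is a constant. Let κ ∈ (0,1] and set φ(μ) = μ^κ ψ(μ) for μ > 0. Then for every n ∈ ℕ there exists a constant C(n,κ) > 0 such that μ^n |φ^{(n)}(μ)| · L^κ ≤ C(n,κ) for all μ > 0. -/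
open Set Real Filter

private lemma ioi_ici_ev {μ : ℝ} (hμ : 0 < μ) : (Set.Ioi (0:ℝ)) =ᶠ[nhds μ] Set.Ici 0 := by
  rw [Filter.eventuallyEq_set]
  filter_upwards [isOpen_Ioi.mem_nhds (show μ ∈ Ioi (0:ℝ) from hμ)] with ν hν
  simp [le_of_lt (show (0:ℝ) < ν from hν), hν]

private lemma iDW_congr (ψ : ℝ → ℝ) (j : ℕ) {μ : ℝ} (hμ : 0 < μ) :
    iteratedDerivWithin j ψ (Set.Ioi 0) μ = iteratedDerivWithin j ψ (Set.Ici 0) μ := by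
  simp only [iteratedDerivWithin_eq_iteratedFDerivWithin]
  rw [iteratedFDerivWithin_congr_set (ioi_ici_ev hμ)]

private lemma aux_cm (ψ : ℝ → ℝ)
    (hψ : ContDiffOn ℝ (⊤ : ℕ∞) ψ (Set.Ici 0))
    (hcm : ∀ (j : ℕ) (μ : ℝ), 0 ≤ μ →
      0 ≤ (-1 : ℝ) ^ j * iteratedDerivWithin j ψ (Set.Ici 0) μ) :
    ∀ (j : ℕ) (μ : ℝ), 0 < μ →
      μ ^ j * ((-1:ℝ) ^ j * iteratedDerivWithin j ψ (Set.Ioi 0) μ)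
        ≤ 2 ^ (j*j) * ψ (μ / 2 ^ j) := by
  have hSo : IsOpen (Set.Ioi (0:ℝ)) := isOpen_Ioi
  have hSu : UniqueDiffOn ℝ (Set.Ioi (0:ℝ)) := uniqueDiffOn_Ioi 0
  have hψS : ContDiffOn ℝ (⊤ : ℕ∞) ψ (Set.Ioi 0) := hψ.mono Set.Ioi_subset_Ici_self
  have hψ0 : ∀ ν : ℝ, 0 ≤ ν → 0 ≤ ψ ν := by
    intro ν hν
    have := hcm 0 ν hν
    simpa using this
  have hg0 : ∀ (j : ℕ) (μ : ℝ), 0 < μ →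
      0 ≤ (-1:ℝ)^j * iteratedDerivWithin j ψ (Set.Ioi 0) μ := by
    intro j μ hμ
    rw [iDW_congr ψ j hμ]
    exact hcm j μ hμ.le
  have hdiff : ∀ j : ℕ, DifferentiableOn ℝ (iteratedDerivWithin j ψ (Set.Ioi 0)) (Set.Ioi 0) :=
    fun j => hψS.differentiableOn_iteratedDerivWithin
      (by exact_mod_cast ENat.coe_lt_top j) hSu
  have hder : ∀ (j : ℕ) (μ : ℝ), μ ∈ Set.Ioi (0:ℝ) →
      HasDerivAt (iteratedDerivWithin j ψ (Set.Ioi 0))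
        (iteratedDerivWithin (j+1) ψ (Set.Ioi 0) μ) μ := by
    intro j μ hμ
    have h1 : DifferentiableAt ℝ (iteratedDerivWithin j ψ (Set.Ioi 0)) μ :=
      ((hdiff j) μ hμ).differentiableAt (hSo.mem_nhds hμ)
    have h2 : iteratedDerivWithin (j+1) ψ (Set.Ioi 0) μ
        = deriv (iteratedDerivWithin j ψ (Set.Ioi 0)) μ := by
      rw [iteratedDerivWithin_succ, derivWithin_of_mem_nhds (hSo.mem_nhds hμ)]
    rw [h2]; exact h1.hasDerivAt
  have hgder : ∀ (j : ℕ) (μ : ℝ), μ ∈ Set.Ioi (0:ℝ) →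
      HasDerivAt (fun ν => (-1:ℝ)^j * iteratedDerivWithin j ψ (Set.Ioi 0) ν)
        (-((-1:ℝ)^(j+1) * iteratedDerivWithin (j+1) ψ (Set.Ioi 0) μ)) μ := by
    intro j μ hμ
    have := (hder j μ hμ).const_mul ((-1:ℝ)^j)
    rw [show -((-1:ℝ)^(j+1) * iteratedDerivWithin (j+1) ψ (Set.Ioi 0) μ) = (-1:ℝ)^j * iteratedDerivWithin (j+1) ψ (Set.Ioi 0) μ by ring]
    exact this
  have hanti : ∀ j : ℕ,
      AntitoneOn (fun ν => (-1:ℝ)^j * iteratedDerivWithin j ψ (Set.Ioi 0) ν) (Set.Ioi 0) := by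
    intro j
    apply antitoneOn_of_deriv_nonpos (convex_Ioi 0)
    · exact continuousOn_const.mul (hdiff j).continuousOn
    · intro μ hμ
      rw [interior_Ioi] at hμ
      exact ((hgder j μ hμ).differentiableAt).differentiableWithinAt
    · intro μ hμ
      rw [interior_Ioi] at hμ
      rw [(hgder j μ hμ).deriv]
      have := hg0 (j+1) μ hμ
      linarith
  have hrec : ∀ (j : ℕ) (μ : ℝ), 0 < μ →
      ((-1:ℝ)^(j+1) * iteratedDerivWithin (j+1) ψ (Set.Ioi 0) μ) * (μ/2)
        ≤ (-1:ℝ)^j * iteratedDerivWithin j ψ (Set.Ioi 0) (μ/2) := by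
    intro j μ hμ
    have h2 : μ/2 < μ := by linarith
    have h2' : (0:ℝ) < μ/2 := by linarith
    obtain ⟨c, hc, hceq⟩ := exists_hasDerivAt_eq_slope
      (fun ν => (-1:ℝ)^j * iteratedDerivWithin j ψ (Set.Ioi 0) ν)
      (fun ν => -((-1:ℝ)^(j+1) * iteratedDerivWithin (j+1) ψ (Set.Ioi 0) ν)) h2
      ((continuousOn_const.mul (hdiff j).continuousOn).mono
        (fun x hx => lt_of_lt_of_le h2' hx.1))
      (fun x hx => hgder j x (lt_trans h2' hx.1))
    have hcpos : (0:ℝ) < c := lt_trans h2' hc.1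
    have hmono : (-1:ℝ)^(j+1) * iteratedDerivWithin (j+1) ψ (Set.Ioi 0) μ
        ≤ (-1:ℝ)^(j+1) * iteratedDerivWithin (j+1) ψ (Set.Ioi 0) c :=
      hanti (j+1) (show c ∈ Set.Ioi (0:ℝ) from hcpos) (show μ ∈ Set.Ioi (0:ℝ) from hμ) hc.2.le
    have hgj := hg0 j μ hμ
    have hkey : ((-1:ℝ)^(j+1) * iteratedDerivWithin (j+1) ψ (Set.Ioi 0) c) * (μ/2)
        = (-1:ℝ)^j * iteratedDerivWithin j ψ (Set.Ioi 0) (μ/2)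
          - (-1:ℝ)^j * iteratedDerivWithin j ψ (Set.Ioi 0) μ := by
      have hne : μ - μ/2 ≠ 0 := ne_of_gt (by linarith)
      have h3 : (-((-1:ℝ)^(j+1) * iteratedDerivWithin (j+1) ψ (Set.Ioi 0) c)) * (μ - μ/2)
          = (-1:ℝ)^j * iteratedDerivWithin j ψ (Set.Ioi 0) μ
            - (-1:ℝ)^j * iteratedDerivWithin j ψ (Set.Ioi 0) (μ/2) := by
        rw [hceq]
        exact div_mul_cancel₀ _ hne
      linarith [h3]
    nlinarith [mul_le_mul_of_nonneg_right hmono h2'.le]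
  -- main induction
  intro j
  induction j with
  | zero =>
    intro μ hμ
    simpa using le_refl (ψ μ)
  | succ j ih =>
    intro μ hμ
    have h2' : (0:ℝ) < μ/2 := by linarith
    calc μ^(j+1) * ((-1:ℝ)^(j+1) * iteratedDerivWithin (j+1) ψ (Set.Ioi 0) μ)
        = (2*μ^j) * (((-1:ℝ)^(j+1) * iteratedDerivWithin (j+1) ψ (Set.Ioi 0) μ) * (μ/2)) := by
          ring
      _ ≤ (2*μ^j) * ((-1:ℝ)^j * iteratedDerivWithin j ψ (Set.Ioi 0) (μ/2)) :=
          mul_le_mul_of_nonneg_left (hrec j μ hμ) (by positivity)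
      _ = (2*2^j) * ((μ/2)^j * ((-1:ℝ)^j * iteratedDerivWithin j ψ (Set.Ioi 0) (μ/2))) := by
          have hpow : (2:ℝ)^j * (μ/2)^j = μ^j := by
            rw [div_pow]; field_simp
          rw [← hpow]; ring
      _ ≤ (2*2^j) * (2^(j*j) * ψ ((μ/2) / 2^j)) :=
          mul_le_mul_of_nonneg_left (ih (μ/2) h2') (by positivity)
      _ = 2^((j+1)+j*j) * ψ (μ / 2^(j+1)) := by
          rw [div_div, ← pow_succ', pow_add]
          ring
      _ ≤ 2^((j+1)*(j+1)) * ψ (μ / 2^(j+1)) := by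
          apply mul_le_mul_of_nonneg_right _ (hψ0 _ (by positivity))
          apply pow_le_pow_right₀ (by norm_num)
          nlinarith

private lemma aux_rpow (κ : ℝ) : ∀ (k : ℕ) (μ : ℝ), 0 < μ →
    iteratedDerivWithin k (fun ν : ℝ => ν ^ κ) (Set.Ioi 0) μ
      = (∏ l ∈ Finset.range k, (κ - l)) * μ ^ (κ - k) := by
  intro k
  induction k with
  | zero => intro μ hμ; simp
  | succ k ih =>
    intro μ hμ
    rw [iteratedDerivWithin_succ]
    have hcg : derivWithin (iteratedDerivWithin k (fun ν : ℝ => ν ^ κ) (Set.Ioi 0)) (Set.Ioi 0) μ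
        = derivWithin (fun ν : ℝ => (∏ l ∈ Finset.range k, (κ - l)) * ν ^ (κ - k)) (Set.Ioi 0) μ :=
      derivWithin_congr (fun ν hν => ih ν hν) (ih μ hμ)
    rw [hcg]
    rw [derivWithin_of_mem_nhds (isOpen_Ioi.mem_nhds hμ)]
    have hd : HasDerivAt (fun ν : ℝ => (∏ l ∈ Finset.range k, (κ - l)) * ν ^ (κ - k))
        ((∏ l ∈ Finset.range k, (κ - l)) * ((κ - k) * μ ^ (κ - k - 1))) μ :=
      (Real.hasDerivAt_rpow_const (Or.inl (ne_of_gt hμ))).const_mul _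
    rw [hd.deriv, Finset.prod_range_succ, Nat.cast_add, Nat.cast_one,
      show κ - ((k:ℝ) + 1) = κ - k - 1 from by ring]
    ring


theorem mihlin_scalar_bound_for_relaxation
    (ψ : ℝ → ℝ) (L : ℝ) (hL : 0 < L)
    (hψ : ContDiffOn ℝ (⊤ : ℕ∞) ψ (Set.Ici 0))
    (hcm : ∀ (j : ℕ) (μ : ℝ), 0 ≤ μ →
      0 ≤ (-1 : ℝ) ^ j * iteratedDerivWithin j ψ (Set.Ici 0) μ)
    (hub : ∀ μ : ℝ, 0 ≤ μ → ψ μ ≤ 1 / (1 + μ * L))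
    (κ : ℝ) (hκ : κ ∈ Set.Ioc (0:ℝ) 1) :
    ∀ n : ℕ, ∃ C > 0, ∀ μ : ℝ, 0 < μ →
      μ ^ n * |iteratedDerivWithin n (fun ν => ν ^ κ * ψ ν) (Set.Ioi 0) μ| * L ^ κ ≤ C := by
  obtain ⟨hκ0, hκ1⟩ := hκ
  intro n
  refine ⟨1 + ∑ k ∈ Finset.range (n+1), (n.choose k : ℝ) *
      |∏ l ∈ Finset.range k, (κ - l)| * (2^((n-k)*(n-k)) * (1 + 2^(n-k))), by positivity, ?_⟩
  intro μ hμ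
  have hψ0 : ∀ ν : ℝ, 0 ≤ ν → 0 ≤ ψ ν := by
    intro ν hν
    have := hcm 0 ν hν
    simpa using this
  have hψS : ContDiffOn ℝ (⊤ : ℕ∞) ψ (Set.Ioi 0) := hψ.mono Set.Ioi_subset_Ici_self
  have hrpowC : ContDiffOn ℝ (⊤ : ℕ∞) (fun ν : ℝ => ν ^ κ) (Set.Ioi 0) := fun ν hν =>
    (Real.contDiffAt_rpow_const_of_ne (ne_of_gt hν)).contDiffWithinAt
  have hLeib := norm_iteratedFDerivWithin_mul_le (𝕜 := ℝ)
    hrpowC hψS (uniqueDiffOn_Ioi 0) (show μ ∈ Set.Ioi (0:ℝ) from hμ) (n := n) (by exact_mod_cast le_top)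
  simp only [norm_iteratedFDerivWithin_eq_norm_iteratedDerivWithin, Real.norm_eq_abs] at hLeib
  -- key scalar bound
  have hkey : ∀ m : ℕ, (μ*L)^κ * ψ (μ / 2^m) ≤ 1 + 2^m := by
    intro m
    have hνpos : (0:ℝ) < μ / 2^m := by positivity
    have hψb := hub (μ / 2^m) hνpos.le
    have hψnn := hψ0 (μ / 2^m) hνpos.le
    have hden : (0:ℝ) < 1 + (μ / 2^m) * L := by positivity
    have h2m : (0:ℝ) < 2^m := by positivity
    rcases le_total (μ*L) 1 with h | h
    · have h1 : (μ*L)^κ ≤ 1 := Real.rpow_le_one (by positivity) h hκ0.le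
      have h2 : ψ (μ / 2^m) ≤ 1 := by
        refine hψb.trans ?_
        rw [div_le_one hden]
        nlinarith
      nlinarith [Real.rpow_nonneg (show (0:ℝ) ≤ μ*L by positivity) κ]
    · have h1 : (μ*L)^κ ≤ μ*L := by
        calc (μ*L)^κ ≤ (μ*L)^(1:ℝ) := Real.rpow_le_rpow_of_exponent_le h hκ1
          _ = μ*L := Real.rpow_one _
      have h2 : ψ (μ / 2^m) ≤ 2^m / (μ*L) := by
        refine hψb.trans ?_
        rw [div_le_div_iff₀ hden (by positivity)]
        have hx : μ / 2^m * L * 2^m = μ * L := by field_simp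
        nlinarith
      calc (μ*L)^κ * ψ (μ / 2^m) ≤ (μ*L) * (2^m / (μ*L)) :=
            mul_le_mul h1 h2 hψnn (by positivity)
        _ = 2^m := by field_simp
        _ ≤ 1 + 2^m := by linarith
  have hcmb := aux_cm ψ hψ hcm
  -- per-term bound
  have hterm : ∀ k ∈ Finset.range (n+1),
      μ^n * ((n.choose k : ℝ) * |iteratedDerivWithin k (fun ν : ℝ => ν ^ κ) (Set.Ioi 0) μ|
        * |iteratedDerivWithin (n-k) ψ (Set.Ioi 0) μ|) * L^κ
      ≤ (n.choose k : ℝ) * |∏ l ∈ Finset.range k, (κ - l)| * (2^((n-k)*(n-k)) * (1 + 2^(n-k))) := by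
    intro k hk
    have hkn : k ≤ n := Nat.lt_succ_iff.mp (Finset.mem_range.mp hk)
    set m := n - k with hm
    have habs1 : |iteratedDerivWithin k (fun ν : ℝ => ν ^ κ) (Set.Ioi 0) μ|
        = |∏ l ∈ Finset.range k, (κ - l)| * μ ^ (κ - k) := by
      rw [aux_rpow κ k μ hμ, abs_mul, abs_of_nonneg (Real.rpow_nonneg hμ.le _)]
    have hgnn : 0 ≤ (-1:ℝ)^m * iteratedDerivWithin m ψ (Set.Ioi 0) μ := by
      rw [iDW_congr ψ m hμ]; exact hcm m μ hμ.le
    have habs2 : |iteratedDerivWithin m ψ (Set.Ioi 0) μ|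
        = (-1:ℝ)^m * iteratedDerivWithin m ψ (Set.Ioi 0) μ := by
      rw [← abs_of_nonneg hgnn, abs_mul, abs_pow, abs_neg, abs_one, one_pow, one_mul]
    have hid : μ^n * μ^(κ - (k:ℝ)) * L^κ = (μ*L)^κ * μ^m := by
      rw [← Real.rpow_natCast μ n, ← Real.rpow_natCast μ m, ← Real.rpow_add hμ,
        Real.mul_rpow hμ.le hL.le,
        show (n:ℝ) + (κ - k) = κ + (m:ℝ) from by
          rw [hm, Nat.cast_sub hkn]; ring,
        Real.rpow_add hμ]
      ring
    have hstep1 : μ^m * ((-1:ℝ)^m * iteratedDerivWithin m ψ (Set.Ioi 0) μ)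
        ≤ 2^(m*m) * ψ (μ / 2^m) := hcmb m μ hμ
    have hstep2 : (μ*L)^κ * (μ^m * ((-1:ℝ)^m * iteratedDerivWithin m ψ (Set.Ioi 0) μ))
        ≤ 2^(m*m) * (1 + 2^m) := by
      calc (μ*L)^κ * (μ^m * ((-1:ℝ)^m * iteratedDerivWithin m ψ (Set.Ioi 0) μ))
          ≤ (μ*L)^κ * (2^(m*m) * ψ (μ / 2^m)) :=
            mul_le_mul_of_nonneg_left hstep1 (Real.rpow_nonneg (by positivity) _)
        _ = 2^(m*m) * ((μ*L)^κ * ψ (μ / 2^m)) := by ring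
        _ ≤ 2^(m*m) * (1 + 2^m) :=
            mul_le_mul_of_nonneg_left (hkey m) (by positivity)
    calc μ^n * ((n.choose k : ℝ) * |iteratedDerivWithin k (fun ν : ℝ => ν ^ κ) (Set.Ioi 0) μ|
          * |iteratedDerivWithin m ψ (Set.Ioi 0) μ|) * L^κ
        = ((n.choose k : ℝ) * |∏ l ∈ Finset.range k, (κ - l)|) *
            ((μ^n * μ^(κ - (k:ℝ)) * L^κ) *
              ((-1:ℝ)^m * iteratedDerivWithin m ψ (Set.Ioi 0) μ)) := by
          rw [habs1, habs2]; ring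
      _ = ((n.choose k : ℝ) * |∏ l ∈ Finset.range k, (κ - l)|) *
            ((μ*L)^κ * (μ^m * ((-1:ℝ)^m * iteratedDerivWithin m ψ (Set.Ioi 0) μ))) := by
          rw [hid]; ring
      _ ≤ ((n.choose k : ℝ) * |∏ l ∈ Finset.range k, (κ - l)|) * (2^(m*m) * (1 + 2^m)) :=
          mul_le_mul_of_nonneg_left hstep2 (by positivity)
      _ = (n.choose k : ℝ) * |∏ l ∈ Finset.range k, (κ - l)| * (2^(m*m) * (1 + 2^m)) := by ring
  -- assemble
  calc μ ^ n * |iteratedDerivWithin n (fun ν => ν ^ κ * ψ ν) (Set.Ioi 0) μ| * L ^ κ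
      ≤ μ ^ n * (∑ k ∈ Finset.range (n+1),
          (n.choose k : ℝ) * |iteratedDerivWithin k (fun ν : ℝ => ν ^ κ) (Set.Ioi 0) μ|
            * |iteratedDerivWithin (n-k) ψ (Set.Ioi 0) μ|) * L ^ κ := by
        apply mul_le_mul_of_nonneg_right _ (Real.rpow_nonneg hL.le _)
        exact mul_le_mul_of_nonneg_left hLeib (by positivity)
    _ = ∑ k ∈ Finset.range (n+1), μ^n * ((n.choose k : ℝ)
          * |iteratedDerivWithin k (fun ν : ℝ => ν ^ κ) (Set.Ioi 0) μ|
          * |iteratedDerivWithin (n-k) ψ (Set.Ioi 0) μ|) * L^κ := by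
        rw [Finset.mul_sum, Finset.sum_mul]
    _ ≤ ∑ k ∈ Finset.range (n+1), (n.choose k : ℝ) *
          |∏ l ∈ Finset.range k, (κ - l)| * (2^((n-k)*(n-k)) * (1 + 2^(n-k))) :=
        Finset.sum_le_sum hterm
    _ ≤ 1 + ∑ k ∈ Finset.range (n+1), (n.choose k : ℝ) *
          |∏ l ∈ Finset.range k, (κ - l)| * (2^((n-k)*(n-k)) * (1 + 2^(n-k))) := by linarith
end

section
/- Let d ∈ ℕ and u₀ ∈ L¹(ℝ^d) ∩ L²(ℝ^d) with ∫u₀ ≠ 0 (i.e. ũ₀(0) ≠ 0). Let k be a kernel of type PC with relaxation function s(t,μ) nonincreasing in μ and satisfying s(t,μ) ≥ 1/(1 + μ k(t)⁻¹). Let u(t,·) have Fourier transform ũ(t,ξ) = s(t,|ξ|²)ũ₀(ξ). Then there exist c > 0 and t₀ > 0 such that ‖u(t,·)‖_{L²(ℝ^d)} ≥ c · k(t)^{min{1, d/4}} for almost all t ≥ t₀. -/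
/-!
Pair `𝓕 (u t)` with the Gaussian `g(ξ) = exp (-‖ξ‖² / τ)`. By the multiplication formula and
Cauchy–Schwarz the pairing is at most `‖u t‖₂ ‖𝓕 g‖₂ ≍ ‖u t‖₂ τ^{d/4}`. Tested against
`conj (𝓕 u₀ 0)`, it is at least of order `s(t, τ) τ^{d/2}`: near `0` the integrand is bounded below
because `𝓕 u₀` is continuous with `𝓕 u₀ 0 ≠ 0` and `s t` is nonincreasing, while the part of
the Gaussian outside a fixed ball is `O(exp (-c / τ))`, negligible for small `τ`. Hence
`‖u t‖₂ ≳ s(t, τ) τ^{d/4}` for all small `τ`, and with `s(t, τ) ≥ k / (k + τ)` one takes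
`τ ≍ k(t)` if `d ≤ 4` and a fixed `τ` if `d > 4`.
-/

open MeasureTheory Real Complex Set Filter Metric ComplexConjugate
open scoped FourierTransform RealInnerProductSpace ENNReal

theorem norm_integral_mul_le_eLpNorm_two {α : Type*} [MeasurableSpace α] {μ : Measure α}
    {f g : α → ℂ} (hf : MemLp f 2 μ) (hg : MemLp g 2 μ) :
    ‖∫ x, f x * g x ∂μ‖ ≤ (eLpNorm f 2 μ).toReal * (eLpNorm g 2 μ).toReal := by
  have h := integral_mul_norm_le_Lp_mul_Lq (μ := μ) Real.HolderConjugate.two_two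
    (by simpa using hf) (by simpa using hg)
  rw [hf.eLpNorm_eq_integral_rpow_norm two_ne_zero ENNReal.ofNat_ne_top,
    hg.eLpNorm_eq_integral_rpow_norm two_ne_zero ENNReal.ofNat_ne_top,
    ENNReal.toReal_ofReal (by positivity), ENNReal.toReal_ofReal (by positivity)]
  refine (norm_integral_le_integral_norm _).trans ?_
  simpa [norm_mul, one_div] using h

-- The three cases are `q ≤ τ` (main term), `τ < q < A` (left side ≤ 0 ≤ right side) and `A ≤ q`
-- (the Gaussian tail, where `exp (-q / τ) ≤ exp (-A / 2τ) exp (-q / 2τ)`).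
theorem mul_sub_le_mul_exp_mul {σ : ℝ → ℝ} (hσ : AntitoneOn σ (Ici 0))
    (hσ0 : ∀ q ≥ 0, 0 ≤ σ q) {τ A μ M q w : ℝ} (hτ : 0 < τ) (hτA : τ < A) (hq : 0 ≤ q)
    (hμ : 0 ≤ μ) (hwM : |w| ≤ M) (hwμ : q < A → μ ≤ w) :
    σ τ * ((if q ≤ τ then μ * rexp (-1) else 0)
        - M * rexp (-A / (2 * τ)) * rexp (-(2 * τ)⁻¹ * q))
      ≤ σ q * rexp (-τ⁻¹ * q) * w := by
  have hM : 0 ≤ M := (abs_nonneg w).trans hwM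
  have hστ := hσ0 τ hτ.le
  have hσq := hσ0 q hq
  have htail : 0 ≤ M * rexp (-A / (2 * τ)) * rexp (-(2 * τ)⁻¹ * q) := by positivity
  split_ifs with hqτ
  · have hσ_le : σ τ ≤ σ q := hσ hq hτ.le hqτ
    have hexp : rexp (-1) ≤ rexp (-τ⁻¹ * q) := by
      gcongr
      rw [neg_mul, neg_le_neg_iff, inv_mul_le_iff₀ hτ]
      linarith
    have hw : μ ≤ w := hwμ (hqτ.trans_lt hτA)
    calc σ τ * (μ * rexp (-1) - M * rexp (-A / (2 * τ)) * rexp (-(2 * τ)⁻¹ * q))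
        ≤ σ τ * rexp (-1) * μ := by nlinarith
      _ ≤ σ q * rexp (-τ⁻¹ * q) * w := by gcongr
  · rcases lt_or_ge q A with hqA | hAq
    · have hw : 0 ≤ w := hμ.trans (hwμ hqA)
      have : 0 ≤ σ q * rexp (-τ⁻¹ * q) * w := by positivity
      nlinarith
    · have hσ_le : σ q ≤ σ τ := hσ hτ.le hq (by linarith)
      have hexp : rexp (-τ⁻¹ * q) ≤ rexp (-A / (2 * τ)) * rexp (-(2 * τ)⁻¹ * q) := by
        rw [← Real.exp_add]
        gcongr
        field_simp
        linarith
      have hw : -w ≤ M := (neg_le_abs w).trans hwM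
      calc σ τ * (0 - M * rexp (-A / (2 * τ)) * rexp (-(2 * τ)⁻¹ * q))
          = -(σ τ * (rexp (-A / (2 * τ)) * rexp (-(2 * τ)⁻¹ * q)) * M) := by ring
        _ ≤ -(σ q * rexp (-τ⁻¹ * q) * M) := by gcongr
        _ ≤ σ q * rexp (-τ⁻¹ * q) * w := by
          rw [neg_le, ← mul_neg]; gcongr

theorem exists_pos_forall_exp_neg_div_le {A ε : ℝ} (hA : 0 < A) (hε : 0 < ε) :
    ∃ R > 0, ∀ τ ∈ Ioc 0 R, rexp (-A / τ) ≤ ε := by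
  refine ⟨A / (|Real.log ε| + 1), by positivity, fun τ ⟨hτ, hτR⟩ => ?_⟩
  have hlog : -Real.log ε ≤ A / τ := by
    rw [le_div_iff₀ hτ]
    rw [le_div_iff₀ (by positivity)] at hτR
    nlinarith [neg_le_abs (Real.log ε)]
  calc rexp (-A / τ) ≤ rexp (Real.log ε) := by rw [neg_div]; gcongr; linarith
    _ = ε := Real.exp_log hε

theorem exists_pos_forall_sq_lt_le_re_conj_mul {E : Type*} [NormedAddCommGroup E] {F : E → ℂ}
    (hF : ContinuousAt F 0) (h0 : F 0 ≠ 0) :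
    ∃ A > 0, ∀ ξ, ‖ξ‖ ^ 2 < A → ‖F 0‖ ^ 2 / 2 ≤ (conj (F 0) * F ξ).re := by
  have hcont : ContinuousAt (fun ξ => (conj (F 0) * F ξ).re) 0 := by fun_prop
  have hval : ‖F 0‖ ^ 2 / 2 < (conj (F 0) * F 0).re := by
    rw [mul_comm, Complex.mul_conj, Complex.normSq_eq_norm_sq, Complex.ofReal_re]
    linarith [pow_pos (norm_pos_iff.2 h0) 2]
  obtain ⟨ρ, hρ, hball⟩ := Metric.eventually_nhds_iff.1 (hcont.eventually (lt_mem_nhds hval))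
  refine ⟨ρ ^ 2, by positivity, fun ξ hξ => (hball ?_).le⟩
  rw [dist_zero_right]
  exact lt_of_pow_lt_pow_left₀ 2 hρ.le hξ

section InnerProductSpace

variable {V : Type*} [NormedAddCommGroup V] [InnerProductSpace ℝ V] [MeasurableSpace V]
  [BorelSpace V] [FiniteDimensional ℝ V]

theorem integrable_of_fourier_ne_zero {f : V → ℂ} {ξ : V} (h : 𝓕 f ξ ≠ 0) : Integrable f := by
  by_contra hf
  exact h (integral_undef ((Real.fourierIntegral_convergent_iff ξ).not.mpr hf))

theorem continuous_fourier_of_integrable {f : V → ℂ} (hf : Integrable f) : Continuous (𝓕 f) :=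
  VectorFourier.fourierIntegral_continuous Real.continuous_fourierChar continuous_inner hf

theorem norm_fourier_le_integral_norm (f : V → ℂ) (ξ : V) : ‖𝓕 f ξ‖ ≤ ∫ x, ‖f x‖ :=
  VectorFourier.norm_fourierIntegral_le_integral_norm _ _ _ _ _

theorem fourier_zero_eq_integral (f : V → ℂ) : 𝓕 f 0 = ∫ x, f x := by
  simp [Real.fourier_eq]

theorem integral_fourier_mul_eq_of_integrable {f g : V → ℂ} (hf : Integrable f)
    (hg : Integrable g) : ∫ ξ, 𝓕 f ξ * g ξ = ∫ x, f x * 𝓕 g x := by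
  have h := VectorFourier.integral_fourierIntegral_smul_eq_flip (L := innerₗ V)
    Real.continuous_fourierChar continuous_inner hf hg
  rw [flip_innerₗ] at h
  exact h

theorem integrable_rexp_neg_mul_sq_norm {b : ℝ} (hb : 0 < b) :
    Integrable (fun v : V => rexp (-b * ‖v‖ ^ 2)) := by
  refine Integrable.of_integral_ne_zero ?_
  rw [GaussianFourier.integral_rexp_neg_mul_sq_norm hb]
  positivity

theorem integrable_cexp_neg_mul_sq_norm {b : ℝ} (hb : 0 < b) :
    Integrable (fun v : V => cexp (-(b : ℂ) * ‖v‖ ^ 2)) := by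
  simpa using GaussianFourier.integrable_cexp_neg_mul_sq_norm_add
    (b := (b : ℂ)) (by simpa using hb) 0 (0 : V)

theorem norm_fourier_cexp_neg_mul_sq_norm {b : ℝ} (hb : 0 < b) (x : V) :
    ‖𝓕 (fun v : V => cexp (-(b : ℂ) * ‖v‖ ^ 2)) x‖
      = (π / b) ^ ((Module.finrank ℝ V : ℝ) / 2) * rexp (-(π ^ 2 / b) * ‖x‖ ^ 2) := by
  rw [fourier_gaussian_innerProductSpace (by simpa using hb), norm_mul,
    show ((π : ℂ) / b) ^ ((Module.finrank ℝ V : ℂ) / 2)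
      = ((π / b : ℝ) : ℂ) ^ (((Module.finrank ℝ V : ℝ) / 2 : ℝ) : ℂ) by push_cast; rfl,
    Complex.norm_cpow_eq_rpow_re_of_pos (by positivity), Complex.ofReal_re,
    show -(π : ℂ) ^ 2 * (‖x‖ : ℂ) ^ 2 / b = ((-(π ^ 2 / b) * ‖x‖ ^ 2 : ℝ) : ℂ) by
      push_cast; ring,
    Complex.norm_exp_ofReal]

theorem integral_norm_fourier_cexp_neg_mul_sq_norm_sq {b : ℝ} (hb : 0 < b) :
    ∫ x, ‖𝓕 (fun v : V => cexp (-(b : ℂ) * ‖v‖ ^ 2)) x‖ ^ 2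
      = (π / (2 * b)) ^ ((Module.finrank ℝ V : ℝ) / 2) := by
  set n : ℝ := (Module.finrank ℝ V : ℝ)
  have hsq : ∀ x : V, ‖𝓕 (fun v : V => cexp (-(b : ℂ) * ‖v‖ ^ 2)) x‖ ^ 2
      = ((π / b) ^ 2) ^ (n / 2) * rexp (-(2 * π ^ 2 / b) * ‖x‖ ^ 2) := by
    intro x
    rw [norm_fourier_cexp_neg_mul_sq_norm hb, mul_pow, ← Real.exp_nat_mul,
      Real.rpow_pow_comm (by positivity)]
    congr 2
    push_cast; ring
  simp_rw [hsq]
  rw [integral_const_mul, GaussianFourier.integral_rexp_neg_mul_sq_norm (by positivity),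
    ← Real.mul_rpow (by positivity) (by positivity)]
  congr 1
  field_simp

theorem memLp_fourier_cexp_neg_mul_sq_norm {b : ℝ} (hb : 0 < b) :
    MemLp (𝓕 (fun v : V => cexp (-(b : ℂ) * ‖v‖ ^ 2))) 2 := by
  refine (memLp_two_iff_integrable_sq_norm
    (continuous_fourier_of_integrable (integrable_cexp_neg_mul_sq_norm hb)).aestronglyMeasurable).2
    (Integrable.of_integral_ne_zero ?_)
  rw [integral_norm_fourier_cexp_neg_mul_sq_norm_sq hb]
  positivity

theorem eLpNorm_fourier_cexp_neg_mul_sq_norm {b : ℝ} (hb : 0 < b) :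
    (eLpNorm (𝓕 (fun v : V => cexp (-(b : ℂ) * ‖v‖ ^ 2))) 2).toReal
      = (π / (2 * b)) ^ ((Module.finrank ℝ V : ℝ) / 4) := by
  rw [(memLp_fourier_cexp_neg_mul_sq_norm hb).eLpNorm_eq_integral_rpow_norm two_ne_zero
    ENNReal.ofNat_ne_top, ENNReal.toReal_ofReal (by positivity)]
  simp_rw [ENNReal.toReal_ofNat, Real.rpow_two]
  rw [integral_norm_fourier_cexp_neg_mul_sq_norm_sq hb, ← Real.rpow_mul (by positivity)]
  ring_nf

theorem norm_integral_fourier_mul_gaussian_le {v : V → ℂ} (hv : Integrable v) (hv2 : MemLp v 2)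
    {b : ℝ} (hb : 0 < b) :
    ‖∫ ξ, 𝓕 v ξ * cexp (-(b : ℂ) * ‖ξ‖ ^ 2)‖
      ≤ (eLpNorm v 2).toReal * (π / (2 * b)) ^ ((Module.finrank ℝ V : ℝ) / 4) := by
  rw [integral_fourier_mul_eq_of_integrable hv (integrable_cexp_neg_mul_sq_norm hb),
    ← eLpNorm_fourier_cexp_neg_mul_sq_norm hb]
  exact norm_integral_mul_le_eLpNorm_two hv2 (memLp_fourier_cexp_neg_mul_sq_norm hb)

theorem le_re_integral_fourier_mul_gaussian {σ : ℝ → ℝ} (hσ : AntitoneOn σ (Ici 0))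
    (hσ0 : ∀ q ≥ 0, 0 ≤ σ q) {F : V → ℂ} {c : ℂ} {τ A μ M : ℝ} (hτ : 0 < τ) (hτA : τ < A)
    (hμ : 0 ≤ μ) (hM : ∀ ξ, |(c * F ξ).re| ≤ M) (hnear : ∀ ξ, ‖ξ‖ ^ 2 < A → μ ≤ (c * F ξ).re)
    {v : V → ℂ} (hv : Integrable v) (hvF : ∀ ξ, 𝓕 v ξ = σ (‖ξ‖ ^ 2) * F ξ) :
    σ τ * (μ * rexp (-1) * volume.real (closedBall (0 : V) √τ)
        - M * rexp (-A / (2 * τ)) * (π / (2 * τ)⁻¹) ^ ((Module.finrank ℝ V : ℝ) / 2))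
      ≤ (c * ∫ ξ, 𝓕 v ξ * cexp (-((τ⁻¹ : ℝ) : ℂ) * ‖ξ‖ ^ 2)).re := by
  have hI : Integrable (fun ξ => c * (𝓕 v ξ * cexp (-((τ⁻¹ : ℝ) : ℂ) * ‖ξ‖ ^ 2))) :=
    ((integrable_cexp_neg_mul_sq_norm (inv_pos.2 hτ)).bdd_mul
      (continuous_fourier_of_integrable hv).aestronglyMeasurable
      (ae_of_all _ (norm_fourier_le_integral_norm v))).const_mul c
  have hgauss := (integrable_rexp_neg_mul_sq_norm (V := V) (b := (2 * τ)⁻¹) (by positivity))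
  have hball : Integrable ((closedBall (0 : V) √τ).indicator fun _ => μ * rexp (-1)) :=
    (integrable_indicator_iff measurableSet_closedBall).2
      (integrableOn_const measure_closedBall_lt_top.ne)
  have hre : ∫ ξ, (c * (𝓕 v ξ * cexp (-((τ⁻¹ : ℝ) : ℂ) * ‖ξ‖ ^ 2))).re
      = (∫ ξ, c * (𝓕 v ξ * cexp (-((τ⁻¹ : ℝ) : ℂ) * ‖ξ‖ ^ 2))).re := integral_re hI
  have hminorant : ∫ ξ, σ τ * ((closedBall (0 : V) √τ).indicator (fun _ => μ * rexp (-1)) ξ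
        - M * rexp (-A / (2 * τ)) * rexp (-(2 * τ)⁻¹ * ‖ξ‖ ^ 2))
      = σ τ * (μ * rexp (-1) * volume.real (closedBall (0 : V) √τ)
        - M * rexp (-A / (2 * τ)) * (π / (2 * τ)⁻¹) ^ ((Module.finrank ℝ V : ℝ) / 2)) := by
    rw [integral_const_mul, integral_sub hball (hgauss.const_mul _),
      integral_indicator_const _ measurableSet_closedBall, integral_const_mul,
      GaussianFourier.integral_rexp_neg_mul_sq_norm (by positivity), smul_eq_mul, mul_comm (μ * _)]
  rw [← integral_const_mul, ← hre, ← hminorant]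
  refine integral_mono ((hball.sub (hgauss.const_mul _)).const_mul _) hI.re fun ξ => ?_
  have hre_eq : (c * (𝓕 v ξ * cexp (-((τ⁻¹ : ℝ) : ℂ) * ‖ξ‖ ^ 2))).re
      = σ (‖ξ‖ ^ 2) * rexp (-τ⁻¹ * ‖ξ‖ ^ 2) * (c * F ξ).re := by
    rw [hvF, ← Complex.re_ofReal_mul]
    congr 1
    push_cast [Complex.ofReal_exp]
    ring
  have hind : (closedBall (0 : V) √τ).indicator (fun _ => μ * rexp (-1)) ξ
      = if ‖ξ‖ ^ 2 ≤ τ then μ * rexp (-1) else 0 := by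
    by_cases h : ‖ξ‖ ^ 2 ≤ τ <;>
      simp [h, Real.le_sqrt (norm_nonneg _) hτ.le]
  rw [hre_eq, hind]
  exact mul_sub_le_mul_exp_mul hσ hσ0 hτ hτA (sq_nonneg _) hμ (hM ξ) (hnear ξ)

theorem measureReal_closedBall_sqrt {τ : ℝ} (hτ : 0 ≤ τ) :
    volume.real (closedBall (0 : V) √τ)
      = τ ^ ((Module.finrank ℝ V : ℝ) / 2) * volume.real (ball (0 : V) 1) := by
  rw [measureReal_def, Measure.addHaar_closedBall _ _ (Real.sqrt_nonneg τ), ENNReal.toReal_mul,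
    ENNReal.toReal_ofReal (by positivity), Real.sqrt_eq_rpow, ← Real.rpow_mul_natCast hτ,
    measureReal_def]
  ring_nf

theorem mul_rpow_le_of_fourier_eq {σ : ℝ → ℝ} (hσ : AntitoneOn σ (Ici 0))
    (hσ0 : ∀ q ≥ 0, 0 ≤ σ q) {F : V → ℂ} {c : ℂ} {τ A μ M : ℝ} (hτ : 0 < τ) (hτA : τ < A)
    (hμ : 0 ≤ μ) (hM : ∀ ξ, |(c * F ξ).re| ≤ M) (hnear : ∀ ξ, ‖ξ‖ ^ 2 < A → μ ≤ (c * F ξ).re)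
    {v : V → ℂ} (hv : Integrable v) (hv2 : MemLp v 2) (hvF : ∀ ξ, 𝓕 v ξ = σ (‖ξ‖ ^ 2) * F ξ) :
    σ τ * τ ^ ((Module.finrank ℝ V : ℝ) / 2) * (μ * rexp (-1) * volume.real (ball (0 : V) 1)
        - M * rexp (-A / (2 * τ)) * (2 * π) ^ ((Module.finrank ℝ V : ℝ) / 2))
      ≤ ‖c‖ * (eLpNorm v 2).toReal * (π / 2) ^ ((Module.finrank ℝ V : ℝ) / 4)
        * τ ^ ((Module.finrank ℝ V : ℝ) / 4) := by
  set n : ℝ := (Module.finrank ℝ V : ℝ)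
  have hlow := le_re_integral_fourier_mul_gaussian hσ hσ0 hτ hτA hμ hM hnear hv hvF
  have hup := norm_integral_fourier_mul_gaussian_le hv hv2 (inv_pos.2 hτ)
  rw [measureReal_closedBall_sqrt hτ.le, show π / (2 * τ)⁻¹ = 2 * π * τ by field_simp,
    Real.mul_rpow (by positivity) hτ.le] at hlow
  rw [show π / (2 * τ⁻¹) = π / 2 * τ by field_simp, Real.mul_rpow (by positivity) hτ.le] at hup
  calc _ = σ τ * (μ * rexp (-1) * (τ ^ (n / 2) * volume.real (ball (0 : V) 1))
        - M * rexp (-A / (2 * τ)) * ((2 * π) ^ (n / 2) * τ ^ (n / 2))) := by ring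
    _ ≤ _ := hlow
    _ ≤ ‖c‖ * ‖∫ ξ, 𝓕 v ξ * cexp (-((τ⁻¹ : ℝ) : ℂ) * ‖ξ‖ ^ 2)‖ :=
      (re_le_norm _).trans (norm_mul_le _ _)
    _ ≤ ‖c‖ * ((eLpNorm v 2).toReal * ((π / 2) ^ (n / 4) * τ ^ (n / 4))) := by gcongr
    _ = _ := by ring

theorem exists_mul_rpow_le_eLpNorm_of_fourier_eq_mul {F : V → ℂ} {c : ℂ} {A μ M : ℝ}
    (hc : c ≠ 0) (hA : 0 < A) (hμ : 0 < μ) (hM0 : 0 < M) (hM : ∀ ξ, |(c * F ξ).re| ≤ M)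
    (hnear : ∀ ξ, ‖ξ‖ ^ 2 < A → μ ≤ (c * F ξ).re) :
    ∃ C > 0, ∃ R > 0, ∀ σ : ℝ → ℝ, AntitoneOn σ (Ici 0) → (∀ q ≥ 0, 0 ≤ σ q) →
      ∀ v : V → ℂ, Integrable v → MemLp v 2 → (∀ ξ, 𝓕 v ξ = σ (‖ξ‖ ^ 2) * F ξ) →
        ∀ τ ∈ Ioc 0 R,
          C * (σ τ * τ ^ ((Module.finrank ℝ V : ℝ) / 4)) ≤ (eLpNorm v 2).toReal := by
  set n : ℝ := (Module.finrank ℝ V : ℝ)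
  set κ := μ * rexp (-1) * volume.real (ball (0 : V) 1)
  have hκ : 0 < κ := by
    have : 0 < volume.real (ball (0 : V) 1) :=
      ENNReal.toReal_pos (measure_ball_pos volume _ one_pos).ne' measure_ball_lt_top.ne
    positivity
  have hc' : 0 < ‖c‖ := norm_pos_iff.2 hc
  obtain ⟨R, hR, hsmall⟩ := exists_pos_forall_exp_neg_div_le (half_pos hA)
    (div_pos hκ (by positivity : 0 < 2 * (M * (2 * π) ^ (n / 2))))
  refine ⟨κ / (2 * ‖c‖ * (π / 2) ^ (n / 4)), div_pos hκ (by positivity), min R (A / 2),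
    by positivity, fun σ hσ hσ0 v hv hv2 hvF τ ⟨hτ, hτR⟩ => ?_⟩
  have htail : M * rexp (-A / (2 * τ)) * (2 * π) ^ (n / 2) ≤ κ / 2 := by
    have := hsmall τ ⟨hτ, hτR.trans (min_le_left _ _)⟩
    rw [show -(A / 2) / τ = -A / (2 * τ) by ring, le_div_iff₀ (by positivity)] at this
    linarith
  have hmain : σ τ * τ ^ (n / 2) * (κ / 2)
      ≤ ‖c‖ * (eLpNorm v 2).toReal * (π / 2) ^ (n / 4) * τ ^ (n / 4) :=
    (mul_le_mul_of_nonneg_left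
      (show κ / 2 ≤ κ - M * rexp (-A / (2 * τ)) * (2 * π) ^ (n / 2) by linarith)
      (by have := hσ0 τ hτ.le; positivity)).trans
    (mul_rpow_le_of_fourier_eq hσ hσ0 hτ (by linarith [min_le_right R (A / 2)]) hμ.le hM hnear
      hv hv2 hvF)
  rw [show τ ^ (n / 2) = τ ^ (n / 4) * τ ^ (n / 4) by rw [← Real.rpow_add hτ]; ring_nf] at hmain
  rw [div_mul_eq_mul_div, div_le_iff₀ (by positivity)]
  refine le_of_mul_le_mul_right ?_ (Real.rpow_pos_of_pos hτ (n / 4))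
  linarith

theorem exists_mul_rpow_le_eLpNorm_of_fourier_eq {u₀ : V → ℂ} (hu₀ : Integrable u₀)
    (hmean : ∫ x, u₀ x ≠ 0) :
    ∃ C > 0, ∃ R > 0, ∀ σ : ℝ → ℝ, AntitoneOn σ (Ici 0) → (∀ q ≥ 0, 0 < σ q) →
      ∀ v : V → ℂ, MemLp v 2 → (∀ ξ, 𝓕 v ξ = σ (‖ξ‖ ^ 2) * 𝓕 u₀ ξ) →
        ∀ τ ∈ Ioc 0 R,
          C * (σ τ * τ ^ ((Module.finrank ℝ V : ℝ) / 4)) ≤ (eLpNorm v 2).toReal := by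
  have ha : 𝓕 u₀ 0 ≠ 0 := by rwa [fourier_zero_eq_integral]
  have hN : ‖𝓕 u₀ 0‖ ≤ ∫ x, ‖u₀ x‖ := norm_fourier_le_integral_norm u₀ 0
  have hbound : ∀ ξ, |(conj (𝓕 u₀ 0) * 𝓕 u₀ ξ).re| ≤ ‖𝓕 u₀ 0‖ * ∫ x, ‖u₀ x‖ := fun ξ =>
    (Complex.abs_re_le_norm _).trans <| by
      rw [norm_mul, RCLike.norm_conj]; gcongr; exact norm_fourier_le_integral_norm u₀ ξ
  obtain ⟨A, hA, hnear⟩ :=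
    exists_pos_forall_sq_lt_le_re_conj_mul (continuous_fourier_of_integrable hu₀).continuousAt ha
  have hm : 0 < ‖𝓕 u₀ 0‖ := norm_pos_iff.2 ha
  obtain ⟨C, hC, R, hR, hCR⟩ := exists_mul_rpow_le_eLpNorm_of_fourier_eq_mul
    ((map_ne_zero _).2 ha) hA (by positivity) (mul_pos hm (hm.trans_le hN)) hbound hnear
  refine ⟨C, hC, R, hR, fun σ hσ hσ0 v hv2 hvF =>
    hCR σ hσ (fun q hq => (hσ0 q hq).le) v ?_ hv2 hvF⟩
  -- `𝓕 v` would vanish identically if `v` were not integrable.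
  refine integrable_of_fourier_ne_zero (ξ := 0) ?_
  rw [hvF]
  exact mul_ne_zero (Complex.ofReal_ne_zero.2 (hσ0 _ (sq_nonneg _)).ne') ha

end InnerProductSpace

theorem div_add_le_one_div_one_add_mul_inv {k τ : ℝ} (hk : 0 ≤ k) (hτ : 0 ≤ τ) :
    k / (k + τ) ≤ 1 / (1 + τ * k⁻¹) := by
  rcases hk.eq_or_lt with rfl | hk
  · simp
  · rw [show 1 + τ * k⁻¹ = (k + τ) / k by field_simp, one_div_div]

theorem exists_mul_rpow_min_le {α R K : ℝ} (hα : 0 < α) (hR : 0 < R) (hK : 0 ≤ K) :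
    ∃ c > 0, ∀ k ∈ Icc 0 K, ∃ τ ∈ Ioc 0 R, c * k ^ min 1 α ≤ k / (k + τ) * τ ^ α := by
  rcases le_or_gt α 1 with hα1 | hα1
  · have hK' : 0 < max K R := lt_max_of_lt_right hR
    refine ⟨(R / max K R) ^ α / 2, by positivity, fun k ⟨hk0, hkK⟩ => ?_⟩
    rw [min_eq_right hα1]
    rcases hk0.eq_or_lt with rfl | hk
    · exact ⟨R, ⟨hR, le_rfl⟩, by simp [Real.zero_rpow hα.ne']⟩
    refine ⟨min k R, ⟨lt_min hk hR, min_le_right _ _⟩, ?_⟩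
    have hhalf : 1 / 2 ≤ k / (k + min k R) := by
      rw [le_div_iff₀ (by positivity)]; linarith [min_le_left k R]
    have hscale : R / max K R * k ≤ min k R := by
      refine le_min ?_ ?_
      · exact mul_le_of_le_one_left hk.le ((div_le_one hK').2 (le_max_right _ _))
      · rw [div_mul_eq_mul_div, div_le_iff₀ hK']
        exact mul_le_mul_of_nonneg_left (hkK.trans (le_max_left _ _)) hR.le
    calc (R / max K R) ^ α / 2 * k ^ α = 1 / 2 * (R / max K R * k) ^ α := by
          rw [Real.mul_rpow (by positivity) hk.le]; ring
      _ ≤ k / (k + min k R) * min k R ^ α := by gcongr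
  · refine ⟨R ^ α / (K + R), by positivity, fun k ⟨hk0, hkK⟩ => ⟨R, ⟨hR, le_rfl⟩, ?_⟩⟩
    rw [min_eq_left hα1.le, Real.rpow_one, div_mul_eq_mul_div, mul_comm, ← div_mul_eq_mul_div]
    gcongr

theorem lower_L2_decay_estimate_general
    (d : ℕ) (hd : 1 ≤ d)
    (u0 : EuclideanSpace ℝ (Fin d) → ℂ)
    (hu01 : Integrable u0)
    (hmean : (∫ x, u0 x) ≠ 0)
    (k : ℝ → ℝ) (hknonneg : ∀ t > (0:ℝ), 0 ≤ k t) (hkanti : AntitoneOn k (Set.Ioi 0))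
    (s : ℝ → ℝ → ℝ)
    (hsanti : ∀ t > (0:ℝ), AntitoneOn (s t) (Set.Ici 0))
    (hslow : ∀ t > (0:ℝ), ∀ μ ≥ (0:ℝ), 1 / (1 + μ * (k t)⁻¹) ≤ s t μ)
    (u : ℝ → EuclideanSpace ℝ (Fin d) → ℂ)
    (hu2 : ∀ t > (0:ℝ), MemLp (u t) 2 volume)
    (hufour : ∀ t > (0:ℝ), ∀ ξ, 𝓕 (u t) ξ = (s t (‖ξ‖ ^ 2) : ℂ) * 𝓕 u0 ξ) :
    ∃ c > (0:ℝ), ∃ t₀ > (0:ℝ), ∀ᵐ t ∂(volume.restrict (Set.Ici t₀)),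
      c * k t ^ (min 1 ((d:ℝ) / 4)) ≤ (eLpNorm (u t) 2 volume).toReal := by
  obtain ⟨c₀, hc₀, R, hR, hdecay⟩ := exists_mul_rpow_le_eLpNorm_of_fourier_eq hu01 hmean
  rw [finrank_euclideanSpace_fin] at hdecay
  obtain ⟨c₁, hc₁, hchoice⟩ :=
    exists_mul_rpow_min_le (α := (d : ℝ) / 4) (by positivity) hR (hknonneg 1 one_pos)
  refine ⟨c₀ * c₁, mul_pos hc₀ hc₁, 1, one_pos, ?_⟩
  filter_upwards [ae_restrict_mem measurableSet_Ici] with t (ht : 1 ≤ t)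
  have ht0 : 0 < t := one_pos.trans_le ht
  have hs_pos : ∀ q ≥ 0, 0 < s t q := fun q hq =>
    lt_of_lt_of_le (by have := hknonneg t ht0; positivity) (hslow t ht0 q hq)
  obtain ⟨τ, ⟨hτ, hτR⟩, hτk⟩ :=
    hchoice (k t) ⟨hknonneg t ht0, hkanti (mem_Ioi.2 one_pos) (mem_Ioi.2 ht0) ht⟩
  calc c₀ * c₁ * k t ^ min 1 ((d : ℝ) / 4) ≤ c₀ * (k t / (k t + τ) * τ ^ ((d : ℝ) / 4)) := by
        rw [mul_assoc]; gcongr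
    _ ≤ c₀ * (s t τ * τ ^ ((d : ℝ) / 4)) := by
        gcongr
        exact (div_add_le_one_div_one_add_mul_inv (hknonneg t ht0) hτ.le).trans
          (hslow t ht0 τ hτ.le)
    _ ≤ (eLpNorm (u t) 2 volume).toReal :=
        hdecay (s t) (hsanti t ht0) hs_pos (u t) (hu2 t ht0) (hufour t ht0) τ ⟨hτ, hτR⟩

theorem lower_L2_decay_estimate
    (d : ℕ) (hd : 1 ≤ d)
    (u0 : EuclideanSpace ℝ (Fin d) → ℂ)
    (hu01 : Integrable u0)
    (hu02 : MemLp u0 2 volume)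
    (hmean : (∫ x, u0 x) ≠ 0)
    (k : ℝ → ℝ) (hknonneg : ∀ t > (0:ℝ), 0 ≤ k t) (hkanti : AntitoneOn k (Set.Ioi 0))
    (s : ℝ → ℝ → ℝ)
    (hsanti : ∀ t > (0:ℝ), AntitoneOn (s t) (Set.Ici 0))
    (hslow : ∀ t > (0:ℝ), ∀ μ ≥ (0:ℝ), 1 / (1 + μ * (k t)⁻¹) ≤ s t μ)
    (u : ℝ → EuclideanSpace ℝ (Fin d) → ℂ)
    (hu2 : ∀ t > (0:ℝ), MemLp (u t) 2 volume)
    (hufour : ∀ t > (0:ℝ), ∀ ξ, 𝓕 (u t) ξ = (s t (‖ξ‖ ^ 2) : ℂ) * 𝓕 u0 ξ) :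
    ∃ c > (0:ℝ), ∃ t₀ > (0:ℝ), ∀ᵐ t ∂(volume.restrict (Set.Ici t₀)),
      c * k t ^ (min 1 ((d:ℝ) / 4)) ≤ (eLpNorm (u t) 2 volume).toReal :=
  lower_L2_decay_estimate_general d hd u0 hu01 hmean k hknonneg hkanti s hsanti hslow u hu2 hufour
end

section
/- Let T > 0, k ∈ H¹₁([0,T]) nonnegative and nonincreasing, H ∈ C¹(ℝ) convex, u ∈ L^∞([0,T]), and u₀ ∈ ℝ. Then for almost all t ∈ (0,T): H'(u(t))·(d/dt)(k∗[u−u₀])(t) ≥ (d/dt)(k∗[H(u)−H(u₀)])(t). -/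
/-!
On `(0, T)` write `k(s) = c + ∫₀ˢ k'` (so `c = k(0+)`). Fubini turns `k ∗ w` into
`∫₀ᵗ (c w + k' ∗ w)`, so by Lebesgue's differentiation theorem `d/dt (k ∗ w) = c w + k' ∗ w`
almost everywhere. Put `L = H'(u(t))` and `φ = L (u - u₀) - (H(u) - H(u₀))`. The tangent line
of `H` at `u(t)` gives `φ ≤ φ(t)` and `0 ≤ φ(t)`, so, as `k' ≤ 0`,
`L D₁ - D₂ = c φ(t) + ∫₀ᵗ k'(t - σ) φ(σ) dσ ≥ (c + ∫₀ᵗ k') φ(t) = k(t) φ(t) ≥ 0`.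
-/

open MeasureTheory Set Filter Topology

lemma ConvexOn.deriv_mul_sub_le_sub {S : Set ℝ} {f : ℝ → ℝ} (hf : ConvexOn ℝ S f) {x y : ℝ}
    (hx : x ∈ S) (hy : y ∈ S) (hd : DifferentiableAt ℝ f x) :
    deriv f x * (y - x) ≤ f y - f x := by
  rcases lt_trichotomy x y with hxy | rfl | hyx
  · have h := hf.deriv_le_slope hx hy hxy hd
    rwa [slope_def_field, le_div_iff₀ (sub_pos.2 hxy)] at h
  · simp
  · have h := hf.slope_le_deriv hy hx hyx hd
    rw [slope_def_field, div_le_iff₀ (sub_pos.2 hyx)] at h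
    linarith

lemma MeasureTheory.MemLp.comp_continuous_top {α : Type*} [MeasurableSpace α] {μ : Measure α}
    {u : α → ℝ} (hu : MemLp u ⊤ μ) {H : ℝ → ℝ} (hH : Continuous H) :
    MemLp (fun x => H (u x)) ⊤ μ := by
  obtain ⟨C, hC⟩ := eLpNormEssSup_lt_top_iff_isBoundedUnder.1
    (by simpa only [eLpNorm_exponent_top] using hu.eLpNorm_lt_top)
  obtain ⟨D, hD⟩ := (isCompact_closedBall (0 : ℝ) C).exists_bound_of_continuousOn hH.continuousOn
  refine memLp_top_of_bound (hH.comp_aestronglyMeasurable hu.1) D ?_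
  filter_upwards [hC] with x hx
  exact hD _ (mem_closedBall_zero_iff.2 hx)

lemma exists_eq_add_intervalIntegral_of_hasDerivAt {f f' : ℝ → ℝ} {a b : ℝ} (hab : a < b)
    (hf : ∀ x ∈ Ioo a b, HasDerivAt f (f' x) x) (hf' : IntervalIntegrable f' volume a b) :
    ∃ c, ∀ x ∈ Ioo a b, f x = c + ∫ t in a..x, f' t := by
  obtain ⟨m, hm⟩ := nonempty_Ioo.2 hab
  refine ⟨f m - ∫ t in a..m, f' t, fun x hx => ?_⟩
  have hsub : uIcc m x ⊆ Ioo a b := ordConnected_Ioo.uIcc_subset hm hx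
  have hint : ∀ y ∈ Ioo a b, IntervalIntegrable f' volume a y := fun y hy =>
    hf'.mono_set (uIcc_subset_uIcc left_mem_uIcc (Ioo_subset_Icc_self.trans Icc_subset_uIcc hy))
  have hftc : ∫ t in m..x, f' t = f x - f m :=
    intervalIntegral.integral_eq_sub_of_hasDerivAt (fun y hy => hf y (hsub hy))
      ((hint m hm).symm.trans (hint x hx))
  rw [← intervalIntegral.integral_interval_sub_left (hint x hx) (hint m hm)] at hftc
  linarith

/-- `convDeriv c K w t = c w(t) + (K ∗ w)(t)` is `d/dt (k ∗ w)(t)` for the kernel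
`k(s) = c + ∫₀ˢ K`. -/
noncomputable def convDeriv (c : ℝ) (K w : ℝ → ℝ) (t : ℝ) : ℝ :=
  c * w t + ∫ σ in 0..t, K (t - σ) * w σ

section CausalKernel

variable {K w : ℝ → ℝ}

lemma integrable_comp_sub_mul_restrict_prod (hK : Integrable K) {s t : Set ℝ}
    (hs : MeasurableSet s) (ht : MeasurableSet t) (hw : IntegrableOn w t) :
    Integrable (fun p : ℝ × ℝ => K (p.1 - p.2) * w p.2)
      ((volume.restrict s).prod (volume.restrict t)) := by
  have hconv := (hw.integrable_indicator ht).convolution_integrand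
    (ContinuousLinearMap.mul ℝ ℝ).flip hK
  rw [Measure.prod_restrict]
  refine hconv.integrableOn.congr_fun (fun p hp => ?_) (hs.prod ht)
  simp [indicator_of_mem hp.2, mul_comm]

lemma setIntegral_Ioc_comp_sub_mul (hK0 : ∀ r ≤ 0, K r = 0) {s τ : ℝ} (hs : 0 ≤ s)
    (hsτ : s ≤ τ) : ∫ σ in Ioc 0 τ, K (s - σ) * w σ = ∫ σ in 0..s, K (s - σ) * w σ := by
  rw [intervalIntegral.integral_of_le hs]
  refine setIntegral_eq_of_subset_of_forall_sdiff_eq_zero measurableSet_Ioc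
    (Ioc_subset_Ioc_right hsτ) fun σ hσ => ?_
  have hsσ : s < σ := not_le.1 fun h => hσ.2 ⟨hσ.1.1, h⟩
  rw [hK0 _ (by linarith), zero_mul]

lemma setIntegral_Ioc_comp_sub (hK0 : ∀ r ≤ 0, K r = 0) {σ τ : ℝ} (hσ : 0 ≤ σ)
    (hστ : σ ≤ τ) : ∫ s in Ioc 0 τ, K (s - σ) = ∫ r in 0..(τ - σ), K r := by
  rw [setIntegral_eq_of_subset_of_forall_sdiff_eq_zero measurableSet_Ioc
      (Ioc_subset_Ioc_left hσ) fun s hs => hK0 _ ?_,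
    ← intervalIntegral.integral_of_le hστ, intervalIntegral.integral_comp_sub_right, sub_self]
  have hsσ : s ≤ σ := not_lt.1 fun h => hs.2 ⟨h, hs.1.2⟩
  linarith

lemma intervalIntegrable_integral_comp_sub_mul (hK : Integrable K) (hK0 : ∀ r ≤ 0, K r = 0)
    {τ : ℝ} (hτ : 0 ≤ τ) (hw : IntegrableOn w (Ioc 0 τ)) :
    IntervalIntegrable (fun s => ∫ σ in 0..s, K (s - σ) * w σ) volume 0 τ := by
  rw [intervalIntegrable_iff_integrableOn_Ioc_of_le hτ]
  exact IntegrableOn.congr_fun (integrable_comp_sub_mul_restrict_prod hK measurableSet_Ioc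
    measurableSet_Ioc hw).integral_prod_left
      (fun s hs => setIntegral_Ioc_comp_sub_mul hK0 hs.1.le hs.2) measurableSet_Ioc

lemma integral_integral_comp_sub_mul_swap (hK : Integrable K) (hK0 : ∀ r ≤ 0, K r = 0)
    {τ : ℝ} (hτ : 0 ≤ τ) (hw : IntegrableOn w (Ioc 0 τ)) :
    ∫ σ in 0..τ, (∫ r in 0..(τ - σ), K r) * w σ
      = ∫ s in 0..τ, ∫ σ in 0..s, K (s - σ) * w σ := by
  simp only [intervalIntegral.integral_of_le hτ]
  calc ∫ σ in Ioc 0 τ, (∫ r in 0..(τ - σ), K r) * w σ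
      = ∫ σ in Ioc 0 τ, ∫ s in Ioc 0 τ, K (s - σ) * w σ :=
        setIntegral_congr_fun measurableSet_Ioc fun σ hσ => by
          rw [integral_mul_const, setIntegral_Ioc_comp_sub hK0 hσ.1.le hσ.2]
    _ = ∫ s in Ioc 0 τ, ∫ σ in Ioc 0 τ, K (s - σ) * w σ :=
        (integral_integral_swap (integrable_comp_sub_mul_restrict_prod hK measurableSet_Ioc
          measurableSet_Ioc hw)).symm
    _ = ∫ s in Ioc 0 τ, ∫ σ in 0..s, K (s - σ) * w σ :=
        setIntegral_congr_fun measurableSet_Ioc fun s hs =>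
          setIntegral_Ioc_comp_sub_mul hK0 hs.1.le hs.2

variable {k : ℝ → ℝ} {c T : ℝ}

lemma integral_comp_sub_mul_eq_integral_convDeriv (hK : Integrable K)
    (hK0 : ∀ r ≤ 0, K r = 0) (hk : ∀ s ∈ Ioo 0 T, k s = c + ∫ r in 0..s, K r) {τ : ℝ}
    (hτ : τ ∈ Ioc 0 T) (hw : IntegrableOn w (Ioc 0 τ)) :
    ∫ σ in 0..τ, k (τ - σ) * w σ = ∫ s in 0..τ, convDeriv c K w s := by
  have hw' : IntervalIntegrable w volume 0 τ :=
    (intervalIntegrable_iff_integrableOn_Ioc_of_le hτ.1.le).2 hw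
  have hprim : Continuous fun σ => ∫ r in 0..(τ - σ), K r :=
    (intervalIntegral.continuous_primitive (fun _ _ => hK.intervalIntegrable) 0).comp
      (continuous_const.sub continuous_id)
  calc ∫ σ in 0..τ, k (τ - σ) * w σ
      = ∫ σ in 0..τ, (c * w σ + (∫ r in 0..(τ - σ), K r) * w σ) := by
        refine intervalIntegral.integral_congr_ae ?_
        filter_upwards [Measure.ae_ne volume τ] with σ hστ hσ
        rw [uIoc_of_le hτ.1.le] at hσ
        rw [hk (τ - σ) ⟨by linarith [lt_of_le_of_ne hσ.2 hστ], by linarith [hσ.1, hτ.2]⟩,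
          add_mul]
    _ = (∫ σ in 0..τ, c * w σ) + ∫ s in 0..τ, ∫ σ in 0..s, K (s - σ) * w σ := by
        rw [intervalIntegral.integral_add (hw'.const_mul c) (hw'.continuousOn_mul
          hprim.continuousOn), integral_integral_comp_sub_mul_swap hK hK0 hτ.1.le hw]
    _ = ∫ s in 0..τ, convDeriv c K w s :=
        (intervalIntegral.integral_add (hw'.const_mul c)
          (intervalIntegrable_integral_comp_sub_mul hK hK0 hτ.1.le hw)).symm

lemma ae_hasDerivAt_integral_comp_sub_mul (hK : Integrable K) (hK0 : ∀ r ≤ 0, K r = 0)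
    (hk : ∀ s ∈ Ioo 0 T, k s = c + ∫ r in 0..s, K r) (hT : 0 ≤ T)
    (hw : IntegrableOn w (Ioc 0 T)) :
    ∀ᵐ t ∂(volume.restrict (Ioo 0 T)),
      HasDerivAt (fun τ => ∫ σ in 0..τ, k (τ - σ) * w σ) (convDeriv c K w t) t := by
  have hD : IntervalIntegrable (convDeriv c K w) volume 0 T :=
    (((intervalIntegrable_iff_integrableOn_Ioc_of_le hT).2 hw).const_mul c).add
      (intervalIntegrable_integral_comp_sub_mul hK hK0 hT hw)
  rw [ae_restrict_iff' measurableSet_Ioo]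
  filter_upwards [hD.ae_hasDerivAt_integral] with t hderiv ht
  refine (hderiv (by rw [uIcc_of_le hT]; exact Ioo_subset_Icc_self ht) 0
    left_mem_uIcc).congr_of_eventuallyEq ?_
  filter_upwards [Ioo_mem_nhds ht.1 ht.2] with τ hτ
  exact integral_comp_sub_mul_eq_integral_convDeriv hK hK0 hk ⟨hτ.1, hτ.2.le⟩
    (hw.mono_set (Ioc_subset_Ioc_right hτ.2.le))

lemma intervalIntegrable_comp_sub_mul_of_memLp (hK : Integrable K)
    (hw : MemLp w ⊤ (volume.restrict (Ioc 0 T))) {t : ℝ} (ht : t ∈ Icc 0 T) :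
    IntervalIntegrable (fun σ => K (t - σ) * w σ) volume 0 t := by
  rw [intervalIntegrable_iff_integrableOn_Ioc_of_le ht.1]
  exact (hK.comp_sub_left t).integrableOn.mul_of_top_left
    (hw.mono_measure (Measure.restrict_mono (Ioc_subset_Ioc_right ht.2) le_rfl))

end CausalKernel

lemma mul_le_convDeriv {c t : ℝ} {K φ : ℝ → ℝ} (ht : 0 ≤ t)
    (hK : IntervalIntegrable K volume 0 t)
    (hKφ : IntervalIntegrable (fun σ => K (t - σ) * φ σ) volume 0 t)
    (hK_nonpos : ∀ r ∈ Icc 0 t, K r ≤ 0) (hφ : ∀ σ ∈ Icc 0 t, φ σ ≤ φ t) :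
    (c + ∫ r in 0..t, K r) * φ t ≤ convDeriv c K φ t := by
  have hK_refl : ∫ σ in 0..t, K (t - σ) = ∫ r in 0..t, K r := by
    rw [intervalIntegral.integral_comp_sub_left K t, sub_self, sub_zero]
  have hK_refl_int : IntervalIntegrable (fun σ => K (t - σ)) volume 0 t := by
    simpa using (hK.comp_sub_left t).symm
  have hgap : 0 ≤ ∫ σ in 0..t, K (t - σ) * (φ σ - φ t) :=
    intervalIntegral.integral_nonneg ht fun σ hσ => mul_nonneg_of_nonpos_of_nonpos
      (hK_nonpos _ ⟨by linarith [hσ.2], by linarith [hσ.1]⟩) (sub_nonpos.2 (hφ σ hσ))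
  simp only [mul_sub, intervalIntegral.integral_sub hKφ (hK_refl_int.mul_const _),
    intervalIntegral.integral_mul_const, hK_refl] at hgap
  rw [convDeriv]
  linarith

lemma ConvexOn.convDeriv_comp_sub_le {c t u₀ : ℝ} {K u H : ℝ → ℝ} (hH : ConvexOn ℝ univ H)
    (hHd : DifferentiableAt ℝ H (u t)) (ht : 0 ≤ t) (hK : IntervalIntegrable K volume 0 t)
    (hK_nonpos : ∀ r ∈ Icc 0 t, K r ≤ 0) (hk : 0 ≤ c + ∫ r in 0..t, K r)
    (hKu : IntervalIntegrable (fun σ => K (t - σ) * (u σ - u₀)) volume 0 t)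
    (hKHu : IntervalIntegrable (fun σ => K (t - σ) * (H (u σ) - H u₀)) volume 0 t) :
    convDeriv c K (fun σ => H (u σ) - H u₀) t
      ≤ deriv H (u t) * convDeriv c K (fun σ => u σ - u₀) t := by
  set L := deriv H (u t)
  set φ := fun σ => L * (u σ - u₀) - (H (u σ) - H u₀)
  have hφ : ∀ σ, φ σ ≤ φ t := fun σ => by
    have := hH.deriv_mul_sub_le_sub (mem_univ (u t)) (mem_univ (u σ)) hHd
    simp only [φ]
    linarith
  have hφt : 0 ≤ φ t := by
    have := hH.deriv_mul_sub_le_sub (mem_univ (u t)) (mem_univ u₀) hHd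
    simp only [φ]
    linarith
  have hKφ_eq : (fun σ => K (t - σ) * φ σ)
      = fun σ => L * (K (t - σ) * (u σ - u₀)) - K (t - σ) * (H (u σ) - H u₀) := by
    ext σ
    simp only [φ]
    ring
  have hKφ : IntervalIntegrable (fun σ => K (t - σ) * φ σ) volume 0 t :=
    hKφ_eq ▸ (hKu.const_mul L).sub hKHu
  have hlin : convDeriv c K φ t = L * convDeriv c K (fun σ => u σ - u₀) t
      - convDeriv c K (fun σ => H (u σ) - H u₀) t := by
    rw [convDeriv, convDeriv, convDeriv, hKφ_eq, intervalIntegral.integral_sub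
      (hKu.const_mul L) hKHu, intervalIntegral.integral_const_mul]
    ring
  nlinarith [mul_le_convDeriv (c := c) ht hK hKφ hK_nonpos fun σ _ => hφ σ, mul_nonneg hk hφt]

theorem convex_fundamental_inequality_general
    (T : ℝ) (hT : 0 < T)
    (k k' : ℝ → ℝ)
    (hk'_int : IntervalIntegrable k' volume 0 T)
    (hk_deriv : ∀ t ∈ Set.Ioo (0:ℝ) T, HasDerivAt k (k' t) t)
    (hk_nonneg : ∀ t ∈ Set.Icc (0:ℝ) T, 0 ≤ k t)
    (hk_anti : AntitoneOn k (Set.Icc 0 T))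
    (H : ℝ → ℝ) (hH : ContDiff ℝ 1 H) (hHconv : ConvexOn ℝ Set.univ H)
    (u : ℝ → ℝ) (hu : MemLp u ⊤ (volume.restrict (Set.Ioc 0 T)))
    (u₀ : ℝ) :
    ∀ᵐ t ∂(volume.restrict (Set.Ioo (0:ℝ) T)),
      ∃ D₁ D₂ : ℝ,
        HasDerivAt (fun τ => ∫ σ in (0:ℝ)..τ, k (τ - σ) * (u σ - u₀)) D₁ t ∧
        HasDerivAt (fun τ => ∫ σ in (0:ℝ)..τ, k (τ - σ) * (H (u σ) - H u₀)) D₂ t ∧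
        D₂ ≤ deriv H (u t) * D₁ := by
  set K := (Ioo 0 T).indicator k'
  have hK : Integrable K :=
    (integrable_indicator_iff measurableSet_Ioo).2 (hk'_int.1.mono_set Ioo_subset_Ioc_self)
  have hK0 : ∀ r ≤ 0, K r = 0 := fun r hr => indicator_of_notMem (fun h => by linarith [h.1]) _
  have hK_nonpos : ∀ r, K r ≤ 0 := indicator_nonpos fun r hr => by
    rw [← (hk_deriv r hr).deriv, ← derivWithin_of_mem_nhds (Icc_mem_nhds hr.1 hr.2)]
    exact hk_anti.derivWithin_nonpos
  obtain ⟨c, hc⟩ := exists_eq_add_intervalIntegral_of_hasDerivAt hT hk_deriv hk'_int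
  have hk : ∀ s ∈ Ioo 0 T, k s = c + ∫ r in 0..s, K r := fun s hs => by
    rw [hc s hs, intervalIntegral.integral_congr_ae (ae_of_all _ fun r hr => ?_)]
    rw [uIoc_of_le hs.1.le] at hr
    exact (indicator_of_mem (show r ∈ Ioo 0 T from ⟨hr.1, hr.2.trans_lt hs.2⟩) _).symm
  have hu₁ : MemLp (fun σ => u σ - u₀) ⊤ (volume.restrict (Ioc 0 T)) :=
    hu.sub (memLp_top_const u₀)
  have hu₂ : MemLp (fun σ => H (u σ) - H u₀) ⊤ (volume.restrict (Ioc 0 T)) :=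
    (hu.comp_continuous_top hH.continuous).sub (memLp_top_const _)
  filter_upwards [ae_hasDerivAt_integral_comp_sub_mul hK hK0 hk hT.le (hu₁.integrable le_top),
    ae_hasDerivAt_integral_comp_sub_mul hK hK0 hk hT.le (hu₂.integrable le_top),
    ae_restrict_mem measurableSet_Ioo] with t hd₁ hd₂ ht
  refine ⟨_, _, hd₁, hd₂, hHconv.convDeriv_comp_sub_le (hH.differentiable one_ne_zero _)
    ht.1.le hK.intervalIntegrable (fun r _ => hK_nonpos r) (hk t ht ▸ hk_nonneg t
    (Ioo_subset_Icc_self ht)) (intervalIntegrable_comp_sub_mul_of_memLp hK hu₁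
    (Ioo_subset_Icc_self ht)) (intervalIntegrable_comp_sub_mul_of_memLp hK hu₂
    (Ioo_subset_Icc_self ht))⟩

theorem convex_fundamental_inequality
    (T : ℝ) (hT : 0 < T)
    (k k' : ℝ → ℝ)
    (hk_int : IntervalIntegrable k volume 0 T)
    (hk'_int : IntervalIntegrable k' volume 0 T)
    (hk_deriv : ∀ t ∈ Set.Ioo (0:ℝ) T, HasDerivAt k (k' t) t)
    (hk_nonneg : ∀ t ∈ Set.Icc (0:ℝ) T, 0 ≤ k t)
    (hk_anti : AntitoneOn k (Set.Icc 0 T))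
    (H : ℝ → ℝ) (hH : ContDiff ℝ 1 H) (hHconv : ConvexOn ℝ Set.univ H)
    (u : ℝ → ℝ) (hu : MemLp u ⊤ (volume.restrict (Set.Ioc 0 T)))
    (u₀ : ℝ) :
    ∀ᵐ t ∂(volume.restrict (Set.Ioo (0:ℝ) T)),
      ∃ D₁ D₂ : ℝ,
        HasDerivAt (fun τ => ∫ σ in (0:ℝ)..τ, k (τ - σ) * (u σ - u₀)) D₁ t ∧
        HasDerivAt (fun τ => ∫ σ in (0:ℝ)..τ, k (τ - σ) * (H (u σ) - H u₀)) D₂ t ∧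
        D₂ ≤ deriv H (u t) * D₁ :=
  convex_fundamental_inequality_general T hT k k' hk'_int hk_deriv hk_nonneg hk_anti H hH hHconv u
    hu u₀
end

section
/- Let (k,l) ∈ PC and let Z be the associated fundamental solution with spatial Fourier transform Ẑ(t,ξ) = s(t,|ξ|²). Then the mean square displacement m(t) = ∫_{ℝ^d}|x|² Z(t,x) dx satisfies m(t) = 2d·(1∗l)(t) for all t > 0; equivalently, the Laplace transform of m is m̂(λ) = 2d·l̂(λ)/λ. -/
/-!
Restricting `Ẑ(t, ξ) = s(t, |ξ|²)` to `ξ = √μ eᵢ` gives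
`1 - s(t, μ) = ∫ (1 - cos (√μ xᵢ)) Z(t, x) dx`, so by dominated convergence
`(1 - s(t, μ)) / μ → ½ ∫ xᵢ² Z(t, x) dx` as `μ → 0⁺`; summing over `i`, `m(t)` is `2d` times this
limit. On the other hand the Volterra equation reads
`(1 - s(t, μ)) / μ = ∫₀ᵗ l(t - τ) s(τ, μ) dτ`, and as `|s| ≤ 1` and `s(τ, μ) → 1`, dominated
convergence identifies the same limit as `∫₀ᵗ l`.
-/

open MeasureTheory Filter Real Topology Set

lemma one_sub_cos_sqrt_mul_div_eq {μ : ℝ} (hμ : 0 < μ) (a : ℝ) :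
    (1 - cos (√μ * a)) / μ = a ^ 2 / 2 * sinc (√μ * a / 2) ^ 2 := by
  rcases eq_or_ne a 0 with rfl | ha
  · simp
  have hy : √μ * a / 2 ≠ 0 := by positivity
  rw [sinc_of_ne_zero hy, div_pow, sin_sq_eq_half_sub, mul_div_cancel₀ _ two_ne_zero, div_pow,
    mul_pow, sq_sqrt hμ.le]
  field_simp

lemma tendsto_one_sub_cos_sqrt_mul_div (a : ℝ) :
    Tendsto (fun μ => (1 - cos (√μ * a)) / μ) (𝓝[>] 0) (𝓝 (a ^ 2 / 2)) := by
  have hcont : Continuous fun μ => a ^ 2 / 2 * sinc (√μ * a / 2) ^ 2 :=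
    continuous_const.mul ((continuous_sinc.comp (by fun_prop)).pow 2)
  have hlim : Tendsto (fun μ => a ^ 2 / 2 * sinc (√μ * a / 2) ^ 2) (𝓝[>] 0) (𝓝 (a ^ 2 / 2)) := by
    simpa using (hcont.tendsto 0).mono_left nhdsWithin_le_nhds
  refine hlim.congr' ?_
  filter_upwards [self_mem_nhdsWithin] with μ hμ
  exact (one_sub_cos_sqrt_mul_div_eq hμ a).symm

lemma abs_one_sub_cos_sqrt_mul_div_le {μ : ℝ} (hμ : 0 < μ) (a : ℝ) :
    |(1 - cos (√μ * a)) / μ| ≤ a ^ 2 / 2 := by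
  rw [one_sub_cos_sqrt_mul_div_eq hμ a, abs_of_nonneg (by positivity)]
  refine mul_le_of_le_one_right (by positivity) ?_
  rw [sq_le_one_iff_abs_le_one]
  exact abs_sinc_le_one _

lemma tendsto_one_of_tendsto_one_sub_div {φ : ℝ → ℝ} {L : ℝ}
    (h : Tendsto (fun μ => (1 - φ μ) / μ) (𝓝[>] 0) (𝓝 L)) : Tendsto φ (𝓝[>] 0) (𝓝 1) := by
  have hmul := ((tendsto_id (x := 𝓝 (0 : ℝ))).mono_left nhdsWithin_le_nhds).mul h
  rw [zero_mul] at hmul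
  have hsub := (tendsto_const_nhds (x := (1 : ℝ))).sub hmul
  rw [sub_zero] at hsub
  refine hsub.congr' ?_
  filter_upwards [self_mem_nhdsWithin] with μ (hμ : 0 < μ)
  simp [mul_div_cancel₀ _ hμ.ne']

section ProbabilityDensity

variable {α : Type*} [MeasurableSpace α] {ν : Measure α} {f : α → ℝ}

lemma integral_cos_mul_eq_re_integral_exp {g : α → ℝ} (hg : AEStronglyMeasurable g ν)
    (hf : Integrable f ν) :
    ∫ x, cos (g x) * f x ∂ν = (∫ x, Complex.exp (-Complex.I * (g x : ℂ)) * (f x : ℂ) ∂ν).re := by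
  have hexp (x : α) : -Complex.I * (g x : ℂ) = ((-g x : ℝ) : ℂ) * Complex.I := by push_cast; ring
  have hint : Integrable (fun x => Complex.exp (-Complex.I * (g x : ℂ)) * (f x : ℂ)) ν := by
    refine hf.ofReal.bdd_mul (c := 1) (by fun_prop) (.of_forall fun x => ?_)
    rw [hexp, Complex.norm_exp_ofReal_mul_I]
  rw [← RCLike.re_to_complex, ← integral_re hint]
  congr 1 with x
  rw [hexp, Complex.exp_mul_I]
  simp [← Complex.ofReal_cos, ← Complex.ofReal_sin]

lemma abs_integral_cos_mul_le_one (hf0 : 0 ≤ f) (hf : Integrable f ν) (hf1 : ∫ x, f x ∂ν = 1)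
    (g : α → ℝ) : |∫ x, cos (g x) * f x ∂ν| ≤ 1 := by
  rw [← hf1, ← Real.norm_eq_abs]
  refine norm_integral_le_of_norm_le hf (.of_forall fun x => ?_)
  rw [norm_mul, Real.norm_of_nonneg (hf0 x)]
  exact mul_le_of_le_one_left (hf0 x) (abs_cos_le_one _)

lemma tendsto_one_sub_integral_cos_sqrt_mul_div {a : α → ℝ} (hf : Integrable f ν)
    (hf1 : ∫ x, f x ∂ν = 1) (ha : AEStronglyMeasurable a ν)
    (ha2 : Integrable (fun x => a x ^ 2 * f x) ν) :
    Tendsto (fun μ => (1 - ∫ x, cos (√μ * a x) * f x ∂ν) / μ) (𝓝[>] 0)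
      (𝓝 ((∫ x, a x ^ 2 * f x ∂ν) / 2)) := by
  have hdct : Tendsto (fun μ => ∫ x, (1 - cos (√μ * a x)) / μ * f x ∂ν) (𝓝[>] 0)
      (𝓝 (∫ x, a x ^ 2 / 2 * f x ∂ν)) := by
    have hf' := hf.aestronglyMeasurable
    refine tendsto_integral_filter_of_dominated_convergence (fun x => ‖a x ^ 2 * f x‖ / 2)
      (.of_forall fun μ => by fun_prop) ?_ (ha2.norm.div_const 2)
      (.of_forall fun x => (tendsto_one_sub_cos_sqrt_mul_div (a x)).mul_const (f x))
    filter_upwards [self_mem_nhdsWithin] with μ hμ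
    refine .of_forall fun x => ?_
    simp only [norm_mul, norm_pow, Real.norm_eq_abs, sq_abs]
    rw [mul_div_right_comm]
    exact mul_le_mul_of_nonneg_right (abs_one_sub_cos_sqrt_mul_div_le hμ (a x)) (abs_nonneg _)
  have hcos (μ : ℝ) : Integrable (fun x => cos (√μ * a x) * f x) ν :=
    hf.bdd_mul (c := 1) (by fun_prop) (.of_forall fun x => by simpa using abs_cos_le_one _)
  convert hdct using 2 with μ
  · calc (1 - ∫ x, cos (√μ * a x) * f x ∂ν) / μ
          = (∫ x, (f x - cos (√μ * a x) * f x) ∂ν) / μ := by rw [integral_sub hf (hcos μ), hf1]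
      _ = _ := by rw [← integral_div]; congr 1 with x; ring
  · rw [← integral_div]
    congr 1 with x
    ring

end ProbabilityDensity

lemma integral_norm_sq_mul_pos {E : Type*} [NormedAddCommGroup E] [MeasurableSpace E]
    {ν : Measure E} [NullSingletonClass ν] {f : E → ℝ} (hf0 : 0 ≤ f) (hf : ∫ x, f x ∂ν ≠ 0)
    (h2 : Integrable (fun x => ‖x‖ ^ 2 * f x) ν) : 0 < ∫ x, ‖x‖ ^ 2 * f x ∂ν := by
  have hnonneg : 0 ≤ fun x => ‖x‖ ^ 2 * f x := fun x => mul_nonneg (sq_nonneg _) (hf0 x)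
  refine (integral_nonneg hnonneg).lt_of_ne' fun h => hf (integral_eq_zero_of_ae ?_)
  filter_upwards [(integral_eq_zero_iff_of_nonneg hnonneg h2).1 h, ν.ae_ne 0] with x hx hx0
  exact (mul_eq_zero.1 hx).resolve_left (by positivity)

section RadialFourier

variable {ι : Type*} [Fintype ι] {ν : Measure (EuclideanSpace ℝ ι)}
  {f : EuclideanSpace ℝ ι → ℝ} {φ : ℝ → ℝ}

lemma integrable_sq_apply_mul (hf : AEStronglyMeasurable f ν)
    (h2 : Integrable (fun x => ‖x‖ ^ 2 * f x) ν) (i : ι) :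
    Integrable (fun x => x i ^ 2 * f x) ν := by
  refine h2.mono (by fun_prop) (.of_forall fun x => ?_)
  simp only [norm_mul, norm_pow, norm_norm]
  gcongr
  exact PiLp.norm_apply_le x i

lemma integral_norm_sq_mul_eq_sum (hf : AEStronglyMeasurable f ν)
    (h2 : Integrable (fun x => ‖x‖ ^ 2 * f x) ν) :
    ∫ x, ‖x‖ ^ 2 * f x ∂ν = ∑ i, ∫ x, x i ^ 2 * f x ∂ν := by
  simp_rw [EuclideanSpace.norm_sq_eq, Finset.sum_mul, Real.norm_eq_abs, sq_abs]
  exact integral_finsetSum _ fun i _ => integrable_sq_apply_mul hf h2 i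

lemma integral_cos_sqrt_mul_apply_eq (hf : Integrable f ν)
    (hφ : ∀ ξ : EuclideanSpace ℝ ι,
      ∫ x, Complex.exp (-Complex.I * (inner ℝ x ξ : ℂ)) * (f x : ℂ) ∂ν = (φ (‖ξ‖ ^ 2) : ℂ))
    {μ : ℝ} (hμ : 0 ≤ μ) (i : ι) :
    ∫ x, cos (√μ * x i) * f x ∂ν = φ μ := by
  classical
  have h := hφ (√μ • EuclideanSpace.single i 1)
  rw [norm_smul, PiLp.norm_single, norm_one, mul_one, Real.norm_of_nonneg (sqrt_nonneg _),
    sq_sqrt hμ] at h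
  simp only [real_inner_smul_right, EuclideanSpace.inner_single_right] at h
  rw [integral_cos_mul_eq_re_integral_exp (by fun_prop) hf]
  simpa using congrArg Complex.re h

lemma tendsto_one_sub_div_of_radial_fourier (hf : Integrable f ν)
    (hφ : ∀ ξ : EuclideanSpace ℝ ι,
      ∫ x, Complex.exp (-Complex.I * (inner ℝ x ξ : ℂ)) * (f x : ℂ) ∂ν = (φ (‖ξ‖ ^ 2) : ℂ))
    (hf1 : ∫ x, f x ∂ν = 1)
    (h2 : Integrable (fun x => ‖x‖ ^ 2 * f x) ν) (i : ι) :
    Tendsto (fun μ => (1 - φ μ) / μ) (𝓝[>] 0) (𝓝 ((∫ x, x i ^ 2 * f x ∂ν) / 2)) := by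
  refine (tendsto_one_sub_integral_cos_sqrt_mul_div hf hf1 (by fun_prop)
    (integrable_sq_apply_mul hf.1 h2 i)).congr' ?_
  filter_upwards [self_mem_nhdsWithin] with μ hμ
  rw [integral_cos_sqrt_mul_apply_eq hf hφ (le_of_lt hμ) i]

lemma integral_norm_sq_mul_eq_of_radial_fourier (hf : Integrable f ν)
    (hφ : ∀ ξ : EuclideanSpace ℝ ι,
      ∫ x, Complex.exp (-Complex.I * (inner ℝ x ξ : ℂ)) * (f x : ℂ) ∂ν = (φ (‖ξ‖ ^ 2) : ℂ))
    (hf1 : ∫ x, f x ∂ν = 1)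
    (h2 : Integrable (fun x => ‖x‖ ^ 2 * f x) ν) {L : ℝ}
    (hL : Tendsto (fun μ => (1 - φ μ) / μ) (𝓝[>] 0) (𝓝 L)) :
    ∫ x, ‖x‖ ^ 2 * f x ∂ν = 2 * Fintype.card ι * L := by
  have hcoord (i : ι) : ∫ x, x i ^ 2 * f x ∂ν = 2 * L := by
    linarith [tendsto_nhds_unique (tendsto_one_sub_div_of_radial_fourier hf hφ hf1 h2 i) hL]
  simp only [integral_norm_sq_mul_eq_sum hf.1 h2, hcoord, Finset.sum_const, Finset.card_univ,
    nsmul_eq_mul]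
  ring

end RadialFourier

lemma eq_integral_of_tendsto_one_sub_div {l : ℝ → ℝ} {s : ℝ → ℝ → ℝ} {t L : ℝ} (ht : 0 ≤ t)
    (hl : IntervalIntegrable l volume 0 t)
    (hvolterra : ∀ μ > 0, s t μ + μ * ∫ τ in 0..t, l (t - τ) * s τ μ = 1)
    (hbound : ∀ μ > 0, ∀ τ ∈ Ioc 0 t, |s τ μ| ≤ 1)
    (hlim : ∀ τ ∈ Ioc 0 t, Tendsto (s τ) (𝓝[>] 0) (𝓝 1))
    (hL : Tendsto (fun μ => (1 - s t μ) / μ) (𝓝[>] 0) (𝓝 L)) (hL0 : L ≠ 0) :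
    L = ∫ τ in 0..t, l τ := by
  have hquot (μ : ℝ) (hμ : 0 < μ) : (1 - s t μ) / μ = ∫ τ in 0..t, l (t - τ) * s τ μ := by
    rw [div_eq_iff hμ.ne']
    linarith [hvolterra μ hμ]
  -- `s τ μ` need not be measurable in `τ`; integrability comes from the integral being nonzero.
  have hint : ∀ᶠ μ in 𝓝[>] 0, IntervalIntegrable (fun τ => l (t - τ) * s τ μ) volume 0 t := by
    filter_upwards [hL.eventually_ne hL0, self_mem_nhdsWithin] with μ hμL hμ
    exact intervalIntegral.intervalIntegrable_of_integral_ne_zero (hquot μ hμ ▸ hμL)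
  have hdct : Tendsto (fun μ => ∫ τ in 0..t, l (t - τ) * s τ μ) (𝓝[>] 0)
      (𝓝 (∫ τ in 0..t, l (t - τ) * 1)) := by
    rw [← uIoc_of_le ht] at hbound hlim
    refine intervalIntegral.tendsto_integral_filter_of_dominated_convergence
      (fun τ => ‖l (t - τ)‖) (hint.mono fun μ h => h.def'.aestronglyMeasurable) ?_
      (by simpa using (hl.comp_sub_left t).symm.norm)
      (.of_forall fun τ hτ => (hlim τ hτ).const_mul _)
    filter_upwards [self_mem_nhdsWithin] with μ hμ
    refine .of_forall fun τ hτ => ?_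
    rw [norm_mul, Real.norm_eq_abs (s τ μ)]
    exact mul_le_of_le_one_right (norm_nonneg _) (hbound μ hμ τ hτ)
  simp only [mul_one, intervalIntegral.integral_comp_sub_left, sub_self, sub_zero] at hdct
  refine tendsto_nhds_unique hL (hdct.congr' ?_)
  filter_upwards [self_mem_nhdsWithin] with μ hμ
  exact (hquot μ hμ).symm

theorem mean_square_displacement_formula_general
    (d : ℕ)
    (l : ℝ → ℝ)
    (hl_loc : LocallyIntegrableOn l (Set.Ici 0))
    (s : ℝ → ℝ → ℝ)
    (hvolterra : ∀ μ ≥ (0:ℝ), ∀ t ≥ (0:ℝ),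
      s t μ + μ * (∫ τ in (0:ℝ)..t, l (t - τ) * s τ μ) = 1)
    (Z : ℝ → EuclideanSpace ℝ (Fin d) → ℝ)
    (hZnn : ∀ t > (0:ℝ), ∀ x, 0 ≤ Z t x)
    (hZint : ∀ t > (0:ℝ), Integrable (Z t))
    (hZpdf : ∀ t > (0:ℝ), (∫ x, Z t x) = 1)
    (hZmsd : ∀ t > (0:ℝ), Integrable (fun x => ‖x‖ ^ 2 * Z t x))
    (hhat : ∀ t > (0:ℝ), ∀ ξ : EuclideanSpace ℝ (Fin d),
      (∫ x, Complex.exp (-Complex.I * ((inner ℝ x ξ : ℝ) : ℂ)) * (Z t x : ℂ)) =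
        ((s t (‖ξ‖ ^ 2) : ℝ) : ℂ)) :
    ∀ t > (0:ℝ), (∫ x, ‖x‖ ^ 2 * Z t x) = 2 * d * ∫ τ in (0:ℝ)..t, l τ := by
  intro t ht
  rcases Nat.eq_zero_or_pos d with rfl | hd
  · simp [Subsingleton.elim _ (0 : EuclideanSpace ℝ (Fin 0))]
  have : NeZero d := ⟨hd.ne'⟩
  have hmoment := tendsto_one_sub_div_of_radial_fourier (hZint t ht) (hhat t ht) (hZpdf t ht)
    (hZmsd t ht) 0
  have hmsd := integral_norm_sq_mul_eq_of_radial_fourier (hZint t ht) (hhat t ht) (hZpdf t ht)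
    (hZmsd t ht) hmoment
  rw [Fintype.card_fin] at hmsd
  have hpos : 0 < (∫ x, x 0 ^ 2 * Z t x) / 2 := by
    have h := integral_norm_sq_mul_pos (hZnn t ht) (by simp [hZpdf t ht]) (hZmsd t ht)
    rw [hmsd] at h
    exact pos_of_mul_pos_right h (by positivity)
  have hl : IntervalIntegrable l volume 0 t :=
    (intervalIntegrable_iff_integrableOn_Icc_of_le ht.le).2
      (hl_loc.integrableOn_compact_subset Icc_subset_Ici_self isCompact_Icc)
  rw [hmsd, eq_integral_of_tendsto_one_sub_div ht.le hl (fun μ hμ => hvolterra μ hμ.le t ht.le)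
    (fun μ hμ τ hτ => ?bound) (fun τ hτ => ?lim) hmoment hpos.ne']
  case bound =>
    rw [← integral_cos_sqrt_mul_apply_eq (hZint τ hτ.1) (hhat τ hτ.1) hμ.le 0]
    exact abs_integral_cos_mul_le_one (hZnn τ hτ.1) (hZint τ hτ.1) (hZpdf τ hτ.1) _
  case lim =>
    exact tendsto_one_of_tendsto_one_sub_div
      (tendsto_one_sub_div_of_radial_fourier (hZint τ hτ.1) (hhat τ hτ.1) (hZpdf τ hτ.1)
        (hZmsd τ hτ.1) 0)

theorem mean_square_displacement_formula
    (d : ℕ) (hd : 1 ≤ d)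
    (k l : ℝ → ℝ)
    (hk_loc : LocallyIntegrableOn k (Set.Ici 0))
    (hl_loc : LocallyIntegrableOn l (Set.Ici 0))
    (hk_nonneg : ∀ t, 0 < t → 0 ≤ k t)
    (hk_anti : AntitoneOn k (Set.Ioi 0))
    (hkl : ∀ t, 0 < t → (∫ τ in (0:ℝ)..t, k (t - τ) * l τ) = 1)
    (s : ℝ → ℝ → ℝ)
    (hvolterra : ∀ μ ≥ (0:ℝ), ∀ t ≥ (0:ℝ),
      s t μ + μ * (∫ τ in (0:ℝ)..t, l (t - τ) * s τ μ) = 1)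
    (Z : ℝ → EuclideanSpace ℝ (Fin d) → ℝ)
    (hZnn : ∀ t > (0:ℝ), ∀ x, 0 ≤ Z t x)
    (hZint : ∀ t > (0:ℝ), Integrable (Z t))
    (hZpdf : ∀ t > (0:ℝ), (∫ x, Z t x) = 1)
    (hZmsd : ∀ t > (0:ℝ), Integrable (fun x => ‖x‖ ^ 2 * Z t x))
    (hhat : ∀ t > (0:ℝ), ∀ ξ : EuclideanSpace ℝ (Fin d),
      (∫ x, Complex.exp (-Complex.I * ((inner ℝ x ξ : ℝ) : ℂ)) * (Z t x : ℂ)) =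
        ((s t (‖ξ‖ ^ 2) : ℝ) : ℂ)) :
    ∀ t > (0:ℝ), (∫ x, ‖x‖ ^ 2 * Z t x) = 2 * d * ∫ τ in (0:ℝ)..t, l τ :=
  mean_square_displacement_formula_general d l hl_loc s hvolterra Z hZnn hZint hZpdf hZmsd hhat
end
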